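/- arXiv:1303.6706 — 9 statements merged into one kernel-verified Lean document; each statement's English description precedes it below -/
import Mathlib

section
/- Let a₁, a₂, a₃, a₄, a₆ be integers. There exists a unique formal power series w(z) = Σ_{n≥0} sₙ zⁿ ∈ ℤ⟦z⟧ with zero constant term satisfying the functional equation w(z) = z³ + a₁ z w(z) + a₂ z² w(z) + a₃ w(z)² + a₄ z w(z)² + a₆ w(z)³. Moreover its coefficients satisfy s₀ = s₁ = s₂ = 0, s₃ = 1, and for n ≥ 4, sₙ = a₁ s_{n−1} + a₂ s_{n−2} + a₃ Σ_{k+l=n} s_k s_l + a₄ Σ_{k+l=n−1} s_k s_l + a₆ Σ_{k+l+m=n} s_k s_l s_m. -/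
/-!
Since `w` has no constant term we may write `w = X * v`; dividing the equation by `X` it becomes
`v = X² + X * G(v)` with `G` polynomial in `v`. If `Xᵏ ∣ f - g` then `f - g ∣ G f - G g` gives
`Xᵏ⁺¹ ∣ Ψ f - Ψ g` for `Ψ v = X² + X * G(v)`: the map `Ψ` contracts the `X`-adic metric, so it
has exactly one fixed point, the coefficientwise limit of its iterates from `0`. The recurrence
is the coefficient of `Xⁿ` in the equation.
-/

open PowerSeries Finset

/-- The functional equation satisfied by the formal expansion `w(z) = -1/y`
associated to the Weierstrass equation `y² + a₁xy + a₃y = x³ + a₂x² + a₄x + a₆`. -/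
def WeierstrassFunEq (a₁ a₂ a₃ a₄ a₆ : ℤ) (w : PowerSeries ℤ) : Prop :=
  PowerSeries.constantCoeff w = 0 ∧
    w = X ^ 3 + C a₁ * X * w + C a₂ * X ^ 2 * w + C a₃ * w ^ 2 +
      C a₄ * X * w ^ 2 + C a₆ * w ^ 3

namespace PowerSeries

variable {R : Type*} [Ring R]

theorem eq_of_forall_X_pow_dvd_sub {f g : R⟦X⟧} (h : ∀ k, (X : R⟦X⟧) ^ k ∣ f - g) : f = g := by
  ext n
  have := X_pow_dvd_iff.mp (h (n + 1)) n n.lt_succ_self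
  rwa [map_sub, sub_eq_zero] at this

def IsXAdicContraction (Φ : R⟦X⟧ → R⟦X⟧) : Prop :=
  ∀ k f g, (X : R⟦X⟧) ^ k ∣ f - g → X ^ (k + 1) ∣ Φ f - Φ g

namespace IsXAdicContraction

variable {Φ : R⟦X⟧ → R⟦X⟧}

theorem X_pow_dvd_iterate_succ_sub (hΦ : IsXAdicContraction Φ) (k : ℕ) :
    (X : R⟦X⟧) ^ k ∣ Φ^[k + 1] 0 - Φ^[k] 0 := by
  induction k with
  | zero => exact one_dvd _
  | succ k ih =>
    have := hΦ k _ _ ih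
    rwa [← Function.iterate_succ_apply' Φ (k + 1), ← Function.iterate_succ_apply' Φ k] at this

theorem X_pow_dvd_iterate_sub (hΦ : IsXAdicContraction Φ) {k m : ℕ} (hkm : k ≤ m) :
    (X : R⟦X⟧) ^ k ∣ Φ^[m] 0 - Φ^[k] 0 := by
  induction m, hkm using Nat.le_induction with
  | base => simp
  | succ m hkm ih =>
    rw [← sub_add_sub_cancel _ (Φ^[m] 0)]
    exact dvd_add ((pow_dvd_pow X hkm).trans (hΦ.X_pow_dvd_iterate_succ_sub m)) ih

theorem X_pow_dvd_mk_sub_iterate (hΦ : IsXAdicContraction Φ) (k : ℕ) :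
    (X : R⟦X⟧) ^ k ∣ mk (fun n ↦ coeff n (Φ^[n + 1] 0)) - Φ^[k] 0 := by
  refine X_pow_dvd_iff.mpr fun m hm ↦ ?_
  have := X_pow_dvd_iff.mp (hΦ.X_pow_dvd_iterate_sub hm) m m.lt_succ_self
  rw [map_sub, sub_eq_zero] at this
  rw [map_sub, coeff_mk, this, sub_self]

theorem isFixedPt_mk_coeff_iterate (hΦ : IsXAdicContraction Φ) :
    Function.IsFixedPt Φ (mk fun n ↦ coeff n (Φ^[n + 1] 0)) := by
  refine eq_of_forall_X_pow_dvd_sub fun k ↦ (pow_dvd_pow X k.le_succ).trans ?_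
  have hstep := hΦ k _ _ (hΦ.X_pow_dvd_mk_sub_iterate k)
  rw [← Function.iterate_succ_apply' Φ k] at hstep
  exact sub_add_sub_cancel _ (Φ^[k + 1] 0) _ ▸
    dvd_add hstep (dvd_sub_comm.mp (hΦ.X_pow_dvd_mk_sub_iterate (k + 1)))

theorem eq_of_isFixedPt (hΦ : IsXAdicContraction Φ) {f g : R⟦X⟧} (hf : Function.IsFixedPt Φ f)
    (hg : Function.IsFixedPt Φ g) : f = g :=
  eq_of_forall_X_pow_dvd_sub fun k ↦ by
    induction k with
    | zero => exact one_dvd _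
    | succ k ih => simpa only [hf.eq, hg.eq] using hΦ k f g ih

theorem existsUnique_isFixedPt (hΦ : IsXAdicContraction Φ) : ∃! f, Function.IsFixedPt Φ f :=
  ⟨_, hΦ.isFixedPt_mk_coeff_iterate, fun _ hg ↦ hΦ.eq_of_isFixedPt hg hΦ.isFixedPt_mk_coeff_iterate⟩

end IsXAdicContraction

end PowerSeries

section Weierstrass

variable (a₁ a₂ a₃ a₄ a₆ : ℤ)

/-- The right-hand side of the equation at `w = X * v`, divided by `X`. -/
noncomputable def weierstrassShiftedRHS (v : ℤ⟦X⟧) : ℤ⟦X⟧ :=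
  X ^ 2 + X * (C a₁ * v + C a₂ * X * v + C a₃ * v ^ 2 + C a₄ * X * v ^ 2 + C a₆ * X * v ^ 3)

theorem isXAdicContraction_weierstrassShiftedRHS :
    IsXAdicContraction (weierstrassShiftedRHS a₁ a₂ a₃ a₄ a₆) := by
  intro k f g hfg
  have hdiff : weierstrassShiftedRHS a₁ a₂ a₃ a₄ a₆ f - weierstrassShiftedRHS a₁ a₂ a₃ a₄ a₆ g =
      X * ((f - g) * (C a₁ + C a₂ * X + (C a₃ + C a₄ * X) * (f + g) +
        C a₆ * X * (f ^ 2 + f * g + g ^ 2))) := by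
    unfold weierstrassShiftedRHS
    ring
  rw [hdiff, pow_succ']
  exact mul_dvd_mul_left X (dvd_mul_of_dvd_left hfg _)

theorem X_mul_weierstrassShiftedRHS (v : ℤ⟦X⟧) :
    X * weierstrassShiftedRHS a₁ a₂ a₃ a₄ a₆ v = X ^ 3 + C a₁ * X * (X * v) +
      C a₂ * X ^ 2 * (X * v) + C a₃ * (X * v) ^ 2 + C a₄ * X * (X * v) ^ 2 +
        C a₆ * (X * v) ^ 3 := by
  unfold weierstrassShiftedRHS
  ring

theorem weierstrassFunEq_iff_exists_isFixedPt {w : ℤ⟦X⟧} : WeierstrassFunEq a₁ a₂ a₃ a₄ a₆ w ↔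
    ∃ v, w = X * v ∧ Function.IsFixedPt (weierstrassShiftedRHS a₁ a₂ a₃ a₄ a₆) v := by
  constructor
  · rintro ⟨hw0, hw⟩
    obtain ⟨v, rfl⟩ := X_dvd_iff.mpr hw0
    exact ⟨v, rfl, X_mul_cancel ((X_mul_weierstrassShiftedRHS ..).trans hw.symm)⟩
  · rintro ⟨v, rfl, hv⟩
    refine ⟨by simp, ?_⟩
    rw [← X_mul_weierstrassShiftedRHS, hv.eq]

theorem existsUnique_weierstrassFunEq : ∃! w, WeierstrassFunEq a₁ a₂ a₃ a₄ a₆ w := by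
  obtain ⟨v, hv, hv_unique⟩ :=
    (isXAdicContraction_weierstrassShiftedRHS a₁ a₂ a₃ a₄ a₆).existsUnique_isFixedPt
  refine ⟨X * v, (weierstrassFunEq_iff_exists_isFixedPt ..).mpr ⟨v, rfl, hv⟩, fun w hw ↦ ?_⟩
  obtain ⟨u, rfl, hu⟩ := (weierstrassFunEq_iff_exists_isFixedPt ..).mp hw
  rw [hv_unique u hu]

variable {a₁ a₂ a₃ a₄ a₆}

theorem WeierstrassFunEq.coeff_eq {w : ℤ⟦X⟧} (hw : WeierstrassFunEq a₁ a₂ a₃ a₄ a₆ w) (n : ℕ) :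
    coeff n w = (if n = 3 then 1 else 0) + a₁ * (if 1 ≤ n then coeff (n - 1) w else 0) +
      a₂ * (if 2 ≤ n then coeff (n - 2) w else 0) +
      a₃ * ∑ p ∈ antidiagonal n, coeff p.1 w * coeff p.2 w +
      a₄ * (if 1 ≤ n then ∑ p ∈ antidiagonal (n - 1), coeff p.1 w * coeff p.2 w else 0) +
      a₆ * ∑ p ∈ antidiagonal n, ∑ q ∈ antidiagonal p.2,
        coeff p.1 w * coeff q.1 w * coeff q.2 w := by
  have hsq (m : ℕ) : coeff m (w ^ 2) = ∑ p ∈ antidiagonal m, coeff p.1 w * coeff p.2 w := by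
    rw [sq, coeff_mul]
  have hcube : coeff n (w ^ 3) =
      ∑ p ∈ antidiagonal n, ∑ q ∈ antidiagonal p.2, coeff p.1 w * coeff q.1 w * coeff q.2 w := by
    simp only [pow_succ' w 2, coeff_mul, hsq, mul_sum, mul_assoc]
  have hX (f : ℤ⟦X⟧) : coeff n (X * f) = if 1 ≤ n then coeff (n - 1) f else 0 := by
    simpa using coeff_X_pow_mul' f 1 n
  conv_lhs => rw [hw.2]
  simp only [map_add, coeff_X_pow, mul_assoc, coeff_C_mul, hX, coeff_X_pow_mul', hsq, hcube]

theorem WeierstrassFunEq.coeff_zero_one_two_three {w : ℤ⟦X⟧}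
    (hw : WeierstrassFunEq a₁ a₂ a₃ a₄ a₆ w) :
    coeff 0 w = 0 ∧ coeff 1 w = 0 ∧ coeff 2 w = 0 ∧ coeff 3 w = 1 := by
  have h0 : coeff 0 w = 0 := by simpa using hw.1
  have h1 : coeff 1 w = 0 := by
    simpa [h0, Nat.sum_antidiagonal_eq_sum_range_succ_mk, sum_range_succ] using hw.coeff_eq 1
  have h2 : coeff 2 w = 0 := by
    simpa [h0, h1, Nat.sum_antidiagonal_eq_sum_range_succ_mk, sum_range_succ] using hw.coeff_eq 2
  have h3 : coeff 3 w = 1 := by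
    simpa [h0, h1, h2, Nat.sum_antidiagonal_eq_sum_range_succ_mk, sum_range_succ]
      using hw.coeff_eq 3
  exact ⟨h0, h1, h2, h3⟩

end Weierstrass

theorem stmt0 (a₁ a₂ a₃ a₄ a₆ : ℤ) :
    (∃! w : PowerSeries ℤ, WeierstrassFunEq a₁ a₂ a₃ a₄ a₆ w) ∧
    ∀ w : PowerSeries ℤ, WeierstrassFunEq a₁ a₂ a₃ a₄ a₆ w →
      (fun s : ℕ → ℤ =>
        s 0 = 0 ∧ s 1 = 0 ∧ s 2 = 0 ∧ s 3 = 1 ∧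
        ∀ n : ℕ, 4 ≤ n →
          s n = a₁ * s (n - 1) + a₂ * s (n - 2) +
            a₃ * (∑ p ∈ Finset.HasAntidiagonal.antidiagonal n, s p.1 * s p.2) +
            a₄ * (∑ p ∈ Finset.HasAntidiagonal.antidiagonal (n - 1), s p.1 * s p.2) +
            a₆ * (∑ p ∈ Finset.HasAntidiagonal.antidiagonal n,
                    ∑ q ∈ Finset.HasAntidiagonal.antidiagonal p.2, s p.1 * s q.1 * s q.2))
      (fun i => PowerSeries.coeff i w) := by
  refine ⟨existsUnique_weierstrassFunEq a₁ a₂ a₃ a₄ a₆, fun w hw ↦ ?_⟩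
  obtain ⟨h0, h1, h2, h3⟩ := hw.coeff_zero_one_two_three
  refine ⟨h0, h1, h2, h3, fun n hn ↦ ?_⟩
  beta_reduce
  rw [hw.coeff_eq n, if_neg (by omega), if_pos (by omega), if_pos (by omega), if_pos (by omega),
    zero_add]
end

section
/- Let a₁, a₂, a₃, a₄ be integers and let F ∈ ℤ⟦z⟧ be the unique formal power series with constant term 1 satisfying F(z)² · ((1 − a₁z − a₂z²)² − 4z³(a₃ + a₄z)) = 1. Then for every n ≥ 0 the coefficient of zⁿ in F equals Σ_{m=⌊n/2⌋}^{n} Σ_{k=0}^{⌊m/2⌋} Σ_{r=0}^{n−m−k} C(m,k)·C(m−k,k)·C(m−2k,r)·C(k, n−m−k−r) · a₁^{m−2k−r} a₂^{r} a₃^{2k−n+m+r} a₄^{n−m−k−r}, where terms with a negative exponent (equivalently, with a vanishing binomial coefficient) are zero. -/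
/-!
Write `1 - a₁z - a₂z² = 1 - p` and `q = z³(a₃ + a₄z)`, and let `V = 1/(1 - p)`. Since
`(1 - p)² - 4q = (1 - p)²(1 - 4qV²)`, the series `V · S(qV²)` squares to the inverse of the
discriminant, where `S(t) = Σ C(2k,k) tᵏ = (1 - 4t)^{-1/2}`; the identity `S²(1 - 4t) = 1`
follows from `(1 - 4t) S' = 2S`. As `ℤ⟦z⟧` is a domain, this series is `F`. Expanding
`V^{2k+1} = Σ_j C(2k+j,2k) pʲ` gives `F = Σ_{k,j} C(2k,k) C(2k+j,2k) pʲ qᵏ`, and with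
`m = 2k + j` the identity `C(2k,k) C(m,2k) = C(m,k) C(m-k,k)` turns this into the stated
coefficients.
-/

open PowerSeries Finset

/-- `bCoeff a₁ a₂ a₃ a₄ n = b(n+1)`, the coefficient of `zⁿ` in the `z`-expansion of the
invariant differential of `y² + a₁xy + a₃y = x³ + a₂x² + a₄x`.  The inner sum over `r`
ranges over `0 ≤ r ≤ n - m - k` (and is empty when `m + k > n`); terms with a negative
exponent carry a vanishing binomial coefficient, so truncated subtraction is harmless. -/
def bCoeff (a₁ a₂ a₃ a₄ : ℤ) (n : ℕ) : ℤ :=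
  ∑ m ∈ Finset.Icc (n / 2) n, ∑ k ∈ Finset.range (m / 2 + 1),
    ∑ r ∈ Finset.range (n + 1 - m - k),
      (m.choose k * (m - k).choose k * (m - 2 * k).choose r *
        k.choose (n - m - k - r) : ℤ) *
        a₁ ^ (m - 2 * k - r) * a₂ ^ r * a₃ ^ (2 * k + m + r - n) * a₄ ^ (n - m - k - r)

namespace PowerSeries

variable {R : Type*} [CommRing R]

theorem coeff_subst_mul {W : R⟦X⟧} (hW : constantCoeff W = 0) (f g : R⟦X⟧) (n : ℕ) :
    coeff n (f.subst W * g) = ∑ k ∈ range (n + 1), coeff k f * coeff n (W ^ k * g) := by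
  have hW' : HasSubst W := HasSubst.of_constantCoeff_zero' hW
  set h : R⟦X⟧ := mk fun i ↦ coeff (i + (n + 1)) f
  have hsplit : f.subst W =
      W ^ (n + 1) * h.subst W + ∑ k ∈ range (n + 1), C (coeff k f) * W ^ k := by
    conv_lhs => rw [eq_X_pow_mul_shift_add_trunc (n + 1) f]
    rw [subst_add hW', subst_mul hW', subst_pow hW', subst_X hW', subst_coe hW',
      Polynomial.aeval_eq_sum_range' (natDegree_trunc_lt f n)]
    congr 1
    refine sum_congr rfl fun k hk ↦ ?_
    rw [coeff_trunc, if_pos (mem_range.1 hk), Algebra.smul_def]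
    rfl
  have hX : (X : R⟦X⟧) ^ (n + 1) ∣ W ^ (n + 1) * h.subst W * g :=
    (pow_dvd_pow_of_dvd (X_dvd_iff.2 hW) _).mul_right _ |>.mul_right _
  rw [hsplit, add_mul, map_add, (X_pow_dvd_iff.1 hX) n (Nat.lt_succ_self n), zero_add, sum_mul,
    map_sum]
  refine sum_congr rfl fun k _ ↦ ?_
  rw [mul_assoc, coeff_C_mul]

variable (R) in
noncomputable def centralBinomSeries : R⟦X⟧ := mk fun n ↦ (n.centralBinom : R)

theorem one_sub_four_X_mul_derivative_centralBinomSeries :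
    (1 - 4 * X) * d⁄dX R (centralBinomSeries R) = 2 * centralBinomSeries R := by
  have h4 : (1 - 4 * X) * d⁄dX R (centralBinomSeries R) =
      d⁄dX R (centralBinomSeries R) - C 4 * (X * d⁄dX R (centralBinomSeries R)) := by
    rw [map_ofNat]; ring
  ext n
  rw [h4, map_sub, coeff_C_mul, show (2 : R⟦X⟧) = C 2 by rw [map_ofNat], coeff_C_mul]
  rcases n with _ | n
  · simp [centralBinomSeries, coeff_derivative, Nat.centralBinom]
  · have h := congrArg (Nat.cast : ℕ → R) (Nat.succ_mul_centralBinom_succ (n + 1))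
    push_cast at h
    simp only [coeff_succ_X_mul, coeff_derivative, centralBinomSeries, coeff_mk]
    push_cast
    linear_combination h

theorem centralBinomSeries_sq_mul_one_sub_four_X [IsAddTorsionFree R] :
    centralBinomSeries R ^ 2 * (1 - 4 * X) = 1 := by
  have h := one_sub_four_X_mul_derivative_centralBinomSeries (R := R)
  apply derivative.ext
  · have h4 : d⁄dX R (1 - 4 * X : R⟦X⟧) = -4 := by
      rw [map_sub, derivative_one, ← map_ofNat C 4, (d⁄dX R).leibniz]
      simp
    rw [(d⁄dX R).leibniz, derivative_pow, h4, smul_eq_mul, smul_eq_mul, derivative_one]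
    linear_combination (2 * centralBinomSeries R) * h
  · simp [centralBinomSeries]

variable {p q : R⟦X⟧}

theorem subst_mk_one_mul_one_sub (hp : constantCoeff p = 0) :
    (mk 1 : R⟦X⟧).subst p * (1 - p) = 1 := by
  have hp' := HasSubst.of_constantCoeff_zero' hp
  have h := congrArg (substAlgHom (R := R) hp') (mk_one_mul_one_sub_eq_one R)
  rwa [map_mul, map_sub, map_one, coe_substAlgHom, subst_X hp'] at h

/-- `((1 - p)² - 4q)^{-1/2}`, built as `V · S(qV²)` with `V = 1/(1 - p)`. -/
noncomputable def invSqrtSeries (p q : R⟦X⟧) : R⟦X⟧ :=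
  (mk 1 : R⟦X⟧).subst p * (centralBinomSeries R).subst (q * (mk 1 : R⟦X⟧).subst p ^ 2)

theorem invSqrtSeries_sq_mul [IsAddTorsionFree R] (hp : constantCoeff p = 0)
    (hq : constantCoeff q = 0) : invSqrtSeries p q ^ 2 * ((1 - p) ^ 2 - 4 * q) = 1 := by
  set V := (mk 1 : R⟦X⟧).subst p
  set W := q * V ^ 2
  have hW : HasSubst W := HasSubst.of_constantCoeff_zero' (by simp [W, hq])
  have hS : ((centralBinomSeries R).subst W) ^ 2 * (1 - 4 * W) = 1 := by
    have h := congrArg (substAlgHom (R := R) hW)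
      (centralBinomSeries_sq_mul_one_sub_four_X (R := R))
    rwa [map_mul, map_pow, map_sub, map_one, map_mul, map_ofNat, coe_substAlgHom, subst_X hW] at h
  calc invSqrtSeries p q ^ 2 * ((1 - p) ^ 2 - 4 * q)
      = ((centralBinomSeries R).subst W) ^ 2 * ((V * (1 - p)) ^ 2 - 4 * W) := by
        simp only [invSqrtSeries, V, W]; ring
    _ = 1 := by rw [subst_mk_one_mul_one_sub hp, one_pow, hS]

theorem coeff_invSqrtSeries (hp : constantCoeff p = 0) (hq : constantCoeff q = 0) (n : ℕ) :
    coeff n (invSqrtSeries p q) = ∑ k ∈ range (n + 1), ∑ j ∈ range (n + 1),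
      (k.centralBinom * (2 * k + j).choose (2 * k) : R) * coeff n (p ^ j * q ^ k) := by
  have hp' := HasSubst.of_constantCoeff_zero' hp
  set V := (mk 1 : R⟦X⟧).subst p
  have hW : constantCoeff (q * V ^ 2) = 0 := by simp [hq]
  rw [invSqrtSeries, mul_comm, coeff_subst_mul hW]
  refine sum_congr rfl fun k _ ↦ ?_
  have hV : (q * V ^ 2) ^ k * V =
      (mk fun j ↦ ((2 * k + j).choose (2 * k) : R)).subst p * q ^ k := by
    rw [← mk_one_pow_eq_mk_choose_add, subst_pow hp']
    ring
  rw [hV, coeff_subst_mul hp, mul_sum]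
  refine sum_congr rfl fun j _ ↦ ?_
  simp only [centralBinomSeries, coeff_mk]
  ring

theorem coeff_C_add_C_mul_X_pow (a b : R) (i r : ℕ) :
    coeff r ((C a + C b * X) ^ i) = i.choose r * a ^ (i - r) * b ^ r := by
  have hterm : ∀ j, (C b * X) ^ j * C a ^ (i - j) * (i.choose j : R⟦X⟧) =
      C (i.choose j * a ^ (i - j) * b ^ j) * X ^ j := fun j ↦ by
    simp only [map_mul, map_pow, map_natCast]; ring
  rw [add_comm, add_pow, map_sum]
  simp_rw [hterm, coeff_C_mul_X_pow]
  rw [sum_ite_eq, ite_eq_left_iff, mem_range, not_lt]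
  intro h
  rw [Nat.choose_eq_zero_of_lt (by omega), Nat.cast_zero, zero_mul, zero_mul]

theorem coeff_X_mul_pow_mul_X_pow_three_mul_pow (a b c d : R) (i k n : ℕ) :
    coeff n ((X * (C a + C b * X)) ^ i * (X ^ 3 * (C c + C d * X)) ^ k) =
      ∑ r ∈ range (n + 1 - (i + 3 * k)), (i.choose r * k.choose (n - (i + 3 * k) - r) : R) *
        a ^ (i - r) * b ^ r * c ^ (k - (n - (i + 3 * k) - r)) * d ^ (n - (i + 3 * k) - r) := by
  have hX : (X * (C a + C b * X)) ^ i * (X ^ 3 * (C c + C d * X)) ^ k =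
      X ^ (i + 3 * k) * ((C a + C b * X) ^ i * (C c + C d * X) ^ k) := by
    rw [pow_add, pow_mul, mul_pow, mul_pow]; ring
  rw [hX, coeff_X_pow_mul']
  split_ifs with h
  · rw [coeff_mul, Nat.sum_antidiagonal_eq_sum_range_succ_mk, Nat.succ_eq_add_one,
      show n - (i + 3 * k) + 1 = n + 1 - (i + 3 * k) by omega]
    refine sum_congr rfl fun r _ ↦ ?_
    simp only [coeff_C_add_C_mul_X_pow]
    ring
  · rw [show n + 1 - (i + 3 * k) = 0 by omega, range_zero, sum_empty]

theorem coeff_X_mul_pow_mul_X_pow_three_mul_pow_eq_zero (a b c d : R) {i k n : ℕ}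
    (h : n < i + 3 * k ∨ 2 * i + 4 * k < n) :
    coeff n ((X * (C a + C b * X)) ^ i * (X ^ 3 * (C c + C d * X)) ^ k) = 0 := by
  rw [coeff_X_mul_pow_mul_X_pow_three_mul_pow]
  refine sum_eq_zero fun r hr ↦ ?_
  rw [mem_range] at hr
  rcases lt_or_ge i r with hir | hri
  · rw [Nat.choose_eq_zero_of_lt hir]; simp
  · rw [Nat.choose_eq_zero_of_lt (n := k) (by omega)]; simp

theorem eq_of_sq_mul_eq_one [IsDomain R] (h2 : (2 : R) ≠ 0) {F A G : R⟦X⟧}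
    (hF : F ^ 2 * G = 1) (hA : A ^ 2 * G = 1) (h0 : constantCoeff F = constantCoeff A) :
    F = A := by
  have hG : G ≠ 0 := by rintro rfl; simp at hF
  rcases sq_eq_sq_iff_eq_or_eq_neg.1 (mul_right_cancel₀ hG (hF.trans hA.symm)) with h | h
  · exact h
  · rw [h, map_neg] at h0
    have hc : constantCoeff A = 0 :=
      (mul_eq_zero.1 (show 2 * constantCoeff A = 0 by linear_combination -h0)).resolve_left h2
    simpa [hc] using congrArg constantCoeff hA

end PowerSeries

theorem Finset.sum_Icc_half_sum_sub_two_mul_eq {M : Type*} [AddCommMonoid M] (n : ℕ)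
    (f : ℕ → ℕ → M) (hf : ∀ k j, n < 2 * k + j ∨ 2 * (2 * k + j) < n → f k j = 0) :
    ∑ m ∈ Icc (n / 2) n, ∑ k ∈ range (m / 2 + 1), f k (m - 2 * k) =
      ∑ k ∈ range (n + 1), ∑ j ∈ range (n + 1), f k j := by
  rw [sum_sigma', ← sum_product']
  refine sum_of_injOn (fun x ↦ (x.2, x.1 - 2 * x.2)) ?_ ?_ ?_ (fun _ _ ↦ rfl)
  · rintro ⟨m, k⟩ hmk ⟨m', k'⟩ hmk' h
    simp only [coe_sigma, Set.mem_sigma_iff, coe_Icc, Set.mem_Icc, coe_range, Set.mem_Iio,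
      Prod.mk.injEq] at hmk hmk' h
    obtain ⟨rfl, h⟩ := h
    obtain rfl : m = m' := by omega
    rfl
  · rintro ⟨m, k⟩ hmk
    simp only [coe_sigma, Set.mem_sigma_iff, coe_Icc, Set.mem_Icc, coe_range, Set.mem_Iio] at hmk
    simp only [coe_product, coe_range, Set.mem_prod, Set.mem_Iio]
    omega
  · rintro ⟨k, j⟩ _ hnot
    apply hf
    by_contra! h
    refine hnot ⟨⟨2 * k + j, k⟩, ?_, by simp⟩
    simp only [coe_sigma, Set.mem_sigma_iff, coe_Icc, Set.mem_Icc, coe_range, Set.mem_Iio]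
    omega

theorem bCoeff_eq_sum (a₁ a₂ a₃ a₄ : ℤ) (n : ℕ) :
    bCoeff a₁ a₂ a₃ a₄ n = ∑ m ∈ Icc (n / 2) n, ∑ k ∈ range (m / 2 + 1),
      (m.choose k * (m - k).choose k : ℤ) *
        coeff n ((X * (C a₁ + C a₂ * X)) ^ (m - 2 * k) *
          (X ^ 3 * (C a₃ + C a₄ * X)) ^ k) := by
  refine sum_congr rfl fun m _ ↦ sum_congr rfl fun k hk ↦ ?_
  rw [mem_range] at hk
  rw [coeff_X_mul_pow_mul_X_pow_three_mul_pow, show m - 2 * k + 3 * k = m + k by omega,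
    ← Nat.sub_sub, mul_sum]
  refine sum_congr rfl fun r hr ↦ ?_
  rw [mem_range] at hr
  rw [show n - m - k - r = n - (m + k) - r by omega,
    show 2 * k + m + r - n = k - (n - (m + k) - r) by omega]
  ring

theorem coeff_invSqrtSeries_eq_bCoeff (a₁ a₂ a₃ a₄ : ℤ) (n : ℕ) :
    coeff n (invSqrtSeries (X * (C a₁ + C a₂ * X)) (X ^ 3 * (C a₃ + C a₄ * X))) =
      bCoeff a₁ a₂ a₃ a₄ n := by
  rw [coeff_invSqrtSeries (by simp) (by simp), bCoeff_eq_sum,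
    ← sum_Icc_half_sum_sub_two_mul_eq n _ fun k j hkj ↦ by
      rw [coeff_X_mul_pow_mul_X_pow_three_mul_pow_eq_zero _ _ _ _ (by omega), mul_zero]]
  refine sum_congr rfl fun m _ ↦ sum_congr rfl fun k hk ↦ ?_
  rw [mem_range] at hk
  rw [show 2 * k + (m - 2 * k) = m by omega]
  congr 1
  have h := Nat.choose_mul (n := m) (k := 2 * k) (s := k) (by omega)
  rw [show 2 * k - k = k by omega] at h
  rw [Nat.centralBinom_eq_two_mul_choose, mul_comm]
  exact_mod_cast h

theorem stmt1 (a₁ a₂ a₃ a₄ : ℤ) (F : PowerSeries ℤ)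
    (hF0 : PowerSeries.constantCoeff F = 1)
    (hF : F ^ 2 * ((1 - C a₁ * X - C a₂ * X ^ 2) ^ 2
        - 4 * X ^ 3 * (C a₃ + C a₄ * X)) = 1) :
    ∀ n : ℕ, PowerSeries.coeff n F = bCoeff a₁ a₂ a₃ a₄ n := by
  set A := invSqrtSeries (X * (C a₁ + C a₂ * X)) (X ^ 3 * (C a₃ + C a₄ * X))
  have hA :
      A ^ 2 * ((1 - C a₁ * X - C a₂ * X ^ 2) ^ 2 - 4 * X ^ 3 * (C a₃ + C a₄ * X)) = 1 := by
    rw [show (1 - C a₁ * X - C a₂ * X ^ 2) ^ 2 - 4 * X ^ 3 * (C a₃ + C a₄ * X) =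
      (1 - X * (C a₁ + C a₂ * X)) ^ 2 - 4 * (X ^ 3 * (C a₃ + C a₄ * X)) by ring]
    exact invSqrtSeries_sq_mul (by simp) (by simp)
  have hA0 : constantCoeff A = 1 := by
    rw [← coeff_zero_eq_constantCoeff_apply, coeff_invSqrtSeries_eq_bCoeff]
    simp [bCoeff]
  have hFA : F = A := eq_of_sq_mul_eq_one two_ne_zero hF hA (hF0.trans hA0.symm)
  intro n
  rw [hFA, coeff_invSqrtSeries_eq_bCoeff]
end

section
/- Let a₁, a₂, a₃, a₄ be integers, let w ∈ ℤ⟦z⟧ be the unique power series with zero constant term satisfying w = z³ + a₁zw + a₂z²w + a₃w² + a₄zw², and let F ∈ ℤ⟦z⟧ be the unique power series with constant term 1 satisfying F² · ((1 − a₁z − a₂z²)² − 4z³(a₃ + a₄z)) = 1. Then F · (3z² + 2a₂ z w + a₄ w² + a₁ w) = dw/dz, where dw/dz denotes the formal derivative of w. -/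
/-!
Write the curve equation as `f(z, w) = 0` with
`f = z³ + a₁zw + a₂z²w + a₃w² + a₄zw² - w`, and let `Q = -∂f/∂w = 1 - a₁z - a₂z² - 2(a₃ + a₄z)w`.
Since `w` is a root of the quadratic `(a₃ + a₄z)T² - (1 - a₁z - a₂z²)T + z³`, completing the square
shows that `Q²` is its discriminant `(1 - a₁z - a₂z²)² - 4z³(a₃ + a₄z)`. Hence `(FQ)² = 1`, and since
`FQ` has constant term `1` in the domain `ℤ⟦z⟧`, `FQ = 1`. Implicit differentiation gives
`Q · dw/dz = ∂f/∂z = 3z² + 2a₂zw + a₄w² + a₁w`, and multiplying by `F` yields the identity.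
-/

open PowerSeries

namespace PowerSeries

variable {R : Type*} [CommRing R]

theorem eq_one_of_sq_eq_one [IsDomain R] [NeZero (2 : R)] {u : R⟦X⟧} (hu : u ^ 2 = 1)
    (h0 : constantCoeff u = 1) : u = 1 := by
  refine (sq_eq_one_iff.mp hu).resolve_right fun hneg => two_ne_zero (α := R) ?_
  rw [hneg, map_neg, map_one] at h0
  linear_combination -h0

end PowerSeries

namespace WeierstrassFormalGroup

variable {R : Type*} [CommRing R] (a₁ a₂ a₃ a₄ : R) {w : R⟦X⟧}

noncomputable def tangentFactor (w : R⟦X⟧) : R⟦X⟧ :=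
  1 - C a₁ * X - C a₂ * X ^ 2 - 2 * (C a₃ + C a₄ * X) * w

theorem constantCoeff_tangentFactor (hw0 : constantCoeff w = 0) :
    constantCoeff (tangentFactor a₁ a₂ a₃ a₄ w) = 1 := by
  simp [tangentFactor, hw0]

theorem sq_tangentFactor
    (hw : w = X ^ 3 + C a₁ * X * w + C a₂ * X ^ 2 * w + C a₃ * w ^ 2 + C a₄ * X * w ^ 2) :
    tangentFactor a₁ a₂ a₃ a₄ w ^ 2 =
      (1 - C a₁ * X - C a₂ * X ^ 2) ^ 2 - 4 * X ^ 3 * (C a₃ + C a₄ * X) := by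
  have hquad : (C a₃ + C a₄ * X) * (w * w) + -(1 - C a₁ * X - C a₂ * X ^ 2) * w + X ^ 3 = 0 := by
    linear_combination -hw
  have hdisc := discrim_eq_sq_of_quadratic_eq_zero hquad
  rw [discrim] at hdisc
  rw [tangentFactor]
  linear_combination -hdisc

theorem tangentFactor_mul_derivative
    (hw : w = X ^ 3 + C a₁ * X * w + C a₂ * X ^ 2 * w + C a₃ * w ^ 2 + C a₄ * X * w ^ 2) :
    tangentFactor a₁ a₂ a₃ a₄ w * derivative R w =
      3 * X ^ 2 + 2 * C a₂ * X * w + C a₄ * w ^ 2 + C a₁ * w := by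
  have hd := congrArg (derivative R) hw
  simp only [map_add, Derivation.leibniz, Derivation.leibniz_pow, derivative_X, derivative_C,
    smul_eq_mul, mul_one, mul_zero, add_zero] at hd
  rw [tangentFactor]
  linear_combination hd

end WeierstrassFormalGroup

open WeierstrassFormalGroup

theorem stmt2 (a₁ a₂ a₃ a₄ : ℤ) (w F : PowerSeries ℤ)
    (hw0 : PowerSeries.constantCoeff (R := ℤ) w = 0)
    (hw : w = X ^ 3 + C (R := ℤ) a₁ * X * w + C (R := ℤ) a₂ * X ^ 2 * w + C (R := ℤ) a₃ * w ^ 2 +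
        C (R := ℤ) a₄ * X * w ^ 2)
    (hF0 : PowerSeries.constantCoeff (R := ℤ) F = 1)
    (hF : F ^ 2 * ((1 - C (R := ℤ) a₁ * X - C (R := ℤ) a₂ * X ^ 2) ^ 2
        - 4 * X ^ 3 * (C (R := ℤ) a₃ + C (R := ℤ) a₄ * X)) = 1) :
    F * (3 * X ^ 2 + 2 * C (R := ℤ) a₂ * X * w + C (R := ℤ) a₄ * w ^ 2 + C (R := ℤ) a₁ * w) =
      PowerSeries.derivative ℤ w := by
  have hFQ : F * tangentFactor a₁ a₂ a₃ a₄ w = 1 := by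
    refine eq_one_of_sq_eq_one ?_ ?_
    · rw [mul_pow, sq_tangentFactor a₁ a₂ a₃ a₄ hw, hF]
    · rw [map_mul, hF0, constantCoeff_tangentFactor a₁ a₂ a₃ a₄ hw0, one_mul]
  rw [← tangentFactor_mul_derivative a₁ a₂ a₃ a₄ hw, ← mul_assoc, hFQ, one_mul]
end

section
/- For every nonnegative integer n, the identity Tₙ(x,y) = 2^{−n} Σ_{k=0}^{⌊n/2⌋} (−1)^{k} C(n,k)·C(2n−2k,n) x^{n−2k} (x² − 4y)^{k} holds in ℚ[x,y]; that is, Tₙ(x,y) = (√(x²−4y))ⁿ Pₙ(x/√(x²−4y)), where Pₙ is the n-th Legendre polynomial. -/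
open Finset

/-!
Over any commutative ring the identity holds after clearing the factor `2⁻ⁿ`. Expanding
`(x² - 4y)ᵏ` binomially and comparing the coefficients of `x^(n-2j) yʲ` reduces it to
`∑ₖ (-1)ᵏ C(n,k) C(k,j) C(2n-2k,n) = (-1)ʲ C(n,j) C(n-j,j) 2^(n-2j)`.
By `C(n,k) C(k,j) = C(n,j) C(n-j,k-j)` the left side is `(-1)ʲ C(n,j)` times the coefficient
of `Xⁿ` in `((1 + X)² - 1)^(n-j) = X^(n-j) (X + 2)^(n-j)`.
-/

/-- The generalized central trinomial polynomial
`Tₙ(x,y) = Σ_{k=0}^{⌊n/2⌋} C(n,k)·C(n−k,k) x^{n−2k} y^k` in `ℚ[x,y]`,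
with `x = X 0` and `y = X 1`. -/
noncomputable def genCentralTrinomialQ (n : ℕ) : MvPolynomial (Fin 2) ℚ :=
  ∑ k ∈ Finset.range (n / 2 + 1),
    (n.choose k * (n - k).choose k : ℚ) •
      (MvPolynomial.X 0 ^ (n - 2 * k) * MvPolynomial.X 1 ^ k)

open Polynomial in
theorem sum_neg_one_pow_mul_choose_mul_choose_two_mul (a d : ℕ) :
    ∑ i ∈ range (a + 1), (-1 : ℤ) ^ i * a.choose i * (2 * (a - i)).choose (d + a)
      = a.choose d * 2 ^ (a - d) := by
  have hpoly : (C (-1) + (1 + X) ^ 2 : ℤ[X]) ^ a = X ^ a * (X + C 2) ^ a := by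
    rw [← mul_pow, C_neg, C_1, C_ofNat]; ring
  have hcoeff := congrArg (coeff · (d + a)) hpoly
  rw [add_pow] at hcoeff
  simp only [finsetSum_coeff, ← pow_mul, ← C_eq_natCast, ← C_pow,
    mul_comm _ (C _), coeff_C_mul, coeff_one_add_X_pow, coeff_X_pow_mul',
    coeff_X_add_C_pow] at hcoeff
  simpa [mul_comm, mul_left_comm, mul_assoc] using hcoeff

theorem sum_neg_one_pow_mul_choose_mul_choose_mul_choose_two_mul {n j : ℕ} (hj : j ≤ n) :
    ∑ k ∈ range (n + 1), (-1 : ℤ) ^ k * n.choose k * k.choose j * (2 * n - 2 * k).choose n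
      = (-1) ^ j * n.choose j * (n - j).choose j * 2 ^ (n - 2 * j) := by
  obtain ⟨a, rfl⟩ : ∃ a, n = j + a := ⟨n - j, by omega⟩
  rw [show j + a + 1 = j + (a + 1) by omega, sum_range_add]
  have hlow : ∑ k ∈ range j, (-1 : ℤ) ^ k * (j + a).choose k * k.choose j
      * (2 * (j + a) - 2 * k).choose (j + a) = 0 :=
    sum_eq_zero fun k hk => by simp [Nat.choose_eq_zero_of_lt (mem_range.mp hk)]
  have hterm : ∀ i, (-1 : ℤ) ^ (j + i) * (j + a).choose (j + i) * (j + i).choose j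
      * (2 * (j + a) - 2 * (j + i)).choose (j + a)
      = (-1) ^ j * (j + a).choose j * ((-1) ^ i * a.choose i * (2 * (a - i)).choose (j + a)) := by
    intro i
    have h : ((j + a).choose (j + i) : ℤ) * (j + i).choose j = (j + a).choose j * a.choose i := by
      have := Nat.choose_mul (n := j + a) (k := j + i) (s := j) (by omega)
      rw [Nat.add_sub_cancel_left, Nat.add_sub_cancel_left] at this
      exact_mod_cast this
    rw [show 2 * (j + a) - 2 * (j + i) = 2 * (a - i) by omega, pow_add]
    linear_combination (-1 : ℤ) ^ j * (-1) ^ i * ((2 * (a - i)).choose (j + a) : ℤ) * h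
  simp only [hlow, hterm, zero_add, ← mul_sum, sum_neg_one_pow_mul_choose_mul_choose_two_mul]
  rw [show j + a - j = a by omega, show j + a - 2 * j = a - j by omega]
  ring

theorem pow_sub_two_mul_mul_sq_add_pow {R : Type*} [CommSemiring R] (x z : R) {n k : ℕ}
    (hk : 2 * k ≤ n) :
    x ^ (n - 2 * k) * (x ^ 2 + z) ^ k
      = ∑ j ∈ range (k + 1), k.choose j * (x ^ (n - 2 * j) * z ^ j) := by
  rw [add_comm, add_pow, mul_sum]
  refine sum_congr rfl fun j hj => ?_
  rw [← pow_mul, show n - 2 * j = n - 2 * k + 2 * (k - j) by grind, pow_add]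
  ring

theorem sum_legendre_eq_two_pow_mul_sum_trinomial {R : Type*} [CommRing R] (x y : R) (n : ℕ) :
    ∑ k ∈ range (n / 2 + 1),
        (-1) ^ k * n.choose k * (2 * n - 2 * k).choose n * (x ^ (n - 2 * k) * (x ^ 2 - 4 * y) ^ k)
      = 2 ^ n *
          ∑ k ∈ range (n / 2 + 1), n.choose k * (n - k).choose k * (x ^ (n - 2 * k) * y ^ k) := by
  have hinner : ∀ j ≤ n, ∑ k ∈ range (n / 2 + 1),
      (-1 : R) ^ k * n.choose k * k.choose j * (2 * n - 2 * k).choose n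
        = (-1) ^ j * n.choose j * (n - j).choose j * 2 ^ (n - 2 * j) := by
    intro j hj
    rw [sum_subset (range_subset_range.mpr (show n / 2 + 1 ≤ n + 1 by omega)) fun k hk hk' => by
      simp [Nat.choose_eq_zero_of_lt (show 2 * n - 2 * k < n by simp at hk hk'; omega)]]
    exact_mod_cast congrArg (Int.cast : ℤ → R)
      (sum_neg_one_pow_mul_choose_mul_choose_mul_choose_two_mul hj)
  calc _ = ∑ k ∈ range (n / 2 + 1), ∑ j ∈ range (n / 2 + 1),
        (-1) ^ k * n.choose k * (2 * n - 2 * k).choose n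
          * (k.choose j * (x ^ (n - 2 * j) * (-(4 * y)) ^ j)) := by
        refine sum_congr rfl fun k hk => ?_
        have hk : k ≤ n / 2 := Nat.lt_succ_iff.mp (mem_range.mp hk)
        rw [sub_eq_add_neg, pow_sub_two_mul_mul_sq_add_pow _ _ (by omega), mul_sum,
          sum_subset (range_subset_range.mpr (show k + 1 ≤ n / 2 + 1 by omega)) fun j _ hj => by
            simp [Nat.choose_eq_zero_of_lt (show k < j by simp at hj; omega)]]
    _ = ∑ j ∈ range (n / 2 + 1), (∑ k ∈ range (n / 2 + 1),
        (-1 : R) ^ k * n.choose k * k.choose j * (2 * n - 2 * k).choose n)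
          * ((-4) ^ j * (x ^ (n - 2 * j) * y ^ j)) := by
        rw [sum_comm]
        refine sum_congr rfl fun j _ => ?_
        rw [sum_mul]
        refine sum_congr rfl fun k _ => ?_
        ring
    _ = _ := by
        rw [mul_sum]
        refine sum_congr rfl fun j hj => ?_
        have hj : 2 * j ≤ n := by have := mem_range.mp hj; omega
        rw [hinner j (by omega), show (2 : R) ^ n = 2 ^ (n - 2 * j) * 4 ^ j by
          rw [show (4 : R) = 2 ^ 2 by norm_num, ← pow_mul, ← pow_add, Nat.sub_add_cancel hj]]
        have hsign : (-1 : R) ^ j * (-4) ^ j = 4 ^ j := by rw [← mul_pow]; norm_num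
        linear_combination
          (n.choose j * (n - j).choose j * 2 ^ (n - 2 * j) * (x ^ (n - 2 * j) * y ^ j) : R) * hsign

/-- `Tₙ(x,y) = 2^{-n} Σ_{k=0}^{⌊n/2⌋} (−1)^k C(n,k) C(2n−2k,n) x^{n−2k} (x²−4y)^k`,
i.e. `Tₙ(x,y) = (√(x²−4y))ⁿ Pₙ(x/√(x²−4y))` with `Pₙ` the `n`-th Legendre polynomial. -/
theorem stmt4 (n : ℕ) :
    genCentralTrinomialQ n =
      ((2 : ℚ) ^ (-(n : ℤ))) •
        ∑ k ∈ Finset.range (n / 2 + 1),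
          ((-1 : ℚ) ^ k * n.choose k * (2 * n - 2 * k).choose n) •
            (MvPolynomial.X 0 ^ (n - 2 * k) *
              (MvPolynomial.X 0 ^ 2 - 4 * MvPolynomial.X 1) ^ k) := by
  simp only [genCentralTrinomialQ, MvPolynomial.smul_eq_C_mul, map_mul, map_pow, map_neg, map_one,
    map_natCast]
  rw [sum_legendre_eq_two_pow_mul_sum_trinomial, ← mul_assoc, ← map_ofNat MvPolynomial.C 2,
    ← map_pow, ← map_mul, zpow_neg, zpow_natCast, inv_mul_cancel₀ (by positivity), map_one, one_mul]
end

section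
/- Let E: y² + a₁xy + a₃y = x³ + a₂x² + a₄x with a₁,a₂,a₃,a₄ ∈ ℤ be an elliptic curve (nonzero discriminant Δ), and let p be a prime with p ∤ Δ. Let A_p = 1 + #{(x,y) ∈ 𝔽_p × 𝔽_p : y² + a₁xy + a₃y = x³ + a₂x² + a₄x} and t_p = 1 + p − A_p. Then b(p) ≡ t_p (mod p), where b(n+1) = Σ_{m=⌊n/2⌋}^{n} Σ_{k=0}^{⌊m/2⌋} Σ_{r=0}^{n−m−k} C(m,k)C(m−k,k)C(m−2k,r)C(k,n−m−k−r) a₁^{m−2k−r} a₂^{r} a₃^{2k−n+m+r} a₄^{n−m−k−r}. -/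
/-!
Write `F = u - v` with `u = y (y + a₁x + a₃)` and `v = x (x² + a₂x + a₄)`, and let `n = p - 1`.
Since `F^n` is `0` on the affine curve and `1` off it, the number of affine points is
`≡ -∑_{x,y} F(x,y)^n (mod p)`. In `𝔽_p`, `(u - v)^n = ∑_m u^m v^(n-m)`: both sides are
`(u^p - v^p) / (u - v) = 1` when `u ≠ v`. Summing a polynomial of degree `≤ 2n` over `𝔽_p`
gives minus the sum of its coefficients of `xⁿ` and `x^(2n)`; doing this first in `y`, then
in `x`, turns `∑ F^n` into `∑_m C(m, n-m) [x^m] (x² + a₂x + a₄)^(n-m) (a₁x + a₃)^(2m-n)`,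
and reindexing the expansion of these coefficients gives `b(n+1)`, over `ℤ` and for every `n`.
-/

open PowerSeries Finset

namespace Polynomial

variable {R : Type*} [CommRing R]

theorem coeff_C_mul_X_add_C_pow (a b : R) (t s : ℕ) :
    ((C a * X + C b) ^ t).coeff s = a ^ s * b ^ (t - s) * t.choose s := by
  have hterm (j : ℕ) : (C a * X) ^ j * C b ^ (t - j) * (t.choose j : R[X]) =
      C (a ^ j * b ^ (t - j) * t.choose j) * X ^ j := by
    simp only [map_mul, map_pow, map_natCast]
    ring
  simp_rw [add_pow, finsetSum_coeff, hterm, coeff_C_mul_X_pow, sum_ite_eq, mem_range]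
  split_ifs with h
  · rfl
  · simp [Nat.choose_eq_zero_of_lt (n := t) (k := s) (by omega)]

theorem coeff_quadratic_pow_mul_linear_pow (a₁ a₂ a₃ a₄ : R) (w t m : ℕ) :
    ((X ^ 2 + C a₂ * X + C a₄) ^ w * (C a₁ * X + C a₃) ^ t).coeff m =
      ∑ k ∈ range (w + 1), ∑ r ∈ range (w - k + 1),
        if 2 * k + r ≤ m then
          (w.choose k * (w - k).choose r * t.choose (m - (2 * k + r)) : R) *
            a₁ ^ (m - (2 * k + r)) * a₂ ^ r * a₃ ^ (t - (m - (2 * k + r))) * a₄ ^ (w - k - r)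
        else 0 := by
  have hquad : (X ^ 2 + C a₂ * X + C a₄) ^ w = ∑ k ∈ range (w + 1), ∑ r ∈ range (w - k + 1),
      C (w.choose k * (w - k).choose r * a₂ ^ r * a₄ ^ (w - k - r) : R) * X ^ (2 * k + r) := by
    rw [add_assoc, add_pow]
    refine sum_congr rfl fun k _ => ?_
    rw [add_pow, mul_sum, sum_mul]
    refine sum_congr rfl fun r _ => ?_
    simp only [C_mul, C_pow, map_natCast, mul_pow, pow_add, pow_mul]
    ring
  rw [hquad, sum_mul, finsetSum_coeff]
  refine sum_congr rfl fun k _ => ?_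
  rw [sum_mul, finsetSum_coeff]
  refine sum_congr rfl fun r _ => ?_
  rw [mul_assoc, coeff_C_mul, coeff_X_pow_mul', coeff_C_mul_X_add_C_pow]
  split_ifs <;> ring

end Polynomial

/-- Both sides are `m! / (k! r! j! s! i!)` for `m = 2j + 2i + r + s` and `k = j + i`. -/
theorem Nat.choose_mul_choose_mul_choose_mul_choose (i j r s : ℕ) :
    (2 * j + 2 * i + r + s).choose (2 * j + i + r) * (2 * j + i + r).choose (j + i) *
        (j + r).choose r * (i + s).choose s =
      (2 * j + 2 * i + r + s).choose (j + i) * (j + i + r + s).choose (j + i) *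
        (r + s).choose r * (j + i).choose j := by
  have h (a b c : ℕ) (hc : a + b = c) :
      (c.choose a : ℚ) = c.factorial / (a.factorial * b.factorial) := by
    subst hc
    exact Nat.cast_add_choose ℚ
  apply Nat.cast_injective (R := ℚ)
  push_cast
  rw [h _ (i + s) _ (by ring), h _ (j + r) (2 * j + i + r) (by ring), h _ j (j + r) (by ring),
    h _ i (i + s) (by ring), h _ (j + i + r + s) (2 * j + 2 * i + r + s) (by ring),
    h _ (r + s) (j + i + r + s) (by ring), h _ s _ rfl, h _ i _ rfl]
  field_simp

/-- The coefficient of `xⁿyⁿ` in `∑_{m ≤ n} (y (y + a₁x + a₃))^m (x (x² + a₂x + a₄))^(n-m)`. -/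
noncomputable def hasseCoeff {R : Type*} [CommRing R] (a₁ a₂ a₃ a₄ : R) (n : ℕ) : R :=
  ∑ m ∈ range (n + 1), (m.choose (n - m) : R) *
    ((Polynomial.X ^ 2 + Polynomial.C a₂ * Polynomial.X + Polynomial.C a₄) ^ (n - m) *
      (Polynomial.C a₁ * Polynomial.X + Polynomial.C a₃) ^ (2 * m - n)).coeff m

section hasseCoeff

variable {R : Type*} [CommRing R]

theorem hasseCoeff_term_eq (a₁ a₂ a₃ a₄ : R) {n m k r : ℕ} (hm : m ≤ n) (hkr : k + r ≤ n - m) :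
    (m.choose (n - m) : R) * (if 2 * k + r ≤ m then
        ((n - m).choose k * (n - m - k).choose r * (2 * m - n).choose (m - (2 * k + r)) : R) *
          a₁ ^ (m - (2 * k + r)) * a₂ ^ r * a₃ ^ (2 * m - n - (m - (2 * k + r))) *
          a₄ ^ (n - m - k - r) else 0) =
      (m.choose k * (m - k).choose k * (m - 2 * k).choose r * k.choose (n - m - k - r) : R) *
        a₁ ^ (m - 2 * k - r) * a₂ ^ r * a₃ ^ (2 * k + m + r - n) * a₄ ^ (n - m - k - r) := by
  by_cases hc : n - m ≤ 2 * k + r ∧ 2 * k + r ≤ m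
  · have key : m.choose (n - m) * (n - m).choose k * (n - m - k).choose r *
        (2 * m - n).choose (m - (2 * k + r)) =
        m.choose k * (m - k).choose k * (m - 2 * k).choose r * k.choose (n - m - k - r) := by
      obtain ⟨j, i, s, rfl, hw, rfl⟩ : ∃ j i s, k = j + i ∧ n - m = 2 * j + i + r ∧
          m = 2 * j + 2 * i + r + s :=
        ⟨n - m - k - r, k - (n - m - k - r), m - (2 * k + r), by omega, by omega, by omega⟩
      convert Nat.choose_mul_choose_mul_choose_mul_choose i j r s using 6 <;> omega
    have key' := congrArg (Nat.cast (R := R)) key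
    push_cast at key'
    rw [if_pos hc.2, show 2 * m - n - (m - (2 * k + r)) = 2 * k + m + r - n by omega,
      show m - 2 * k - r = m - (2 * k + r) by omega]
    linear_combination (a₁ ^ (m - (2 * k + r)) * a₂ ^ r * a₃ ^ (2 * k + m + r - n) *
      a₄ ^ (n - m - k - r)) * key'
  · have hR : m.choose k * (m - k).choose k * (m - 2 * k).choose r *
        k.choose (n - m - k - r) = 0 := by
      simp only [mul_eq_zero, Nat.choose_eq_zero_iff]
      omega
    have hR' : (m.choose k * (m - k).choose k * (m - 2 * k).choose r *
        k.choose (n - m - k - r) : R) = 0 := by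
      simpa using congrArg (Nat.cast (R := R)) hR
    rw [hR']
    split_ifs with h
    · have hL : m.choose (n - m) * (2 * m - n).choose (m - (2 * k + r)) = 0 := by
        simp only [mul_eq_zero, Nat.choose_eq_zero_iff]
        omega
      have hL' : (m.choose (n - m) * (2 * m - n).choose (m - (2 * k + r)) : R) = 0 := by
        simpa using congrArg (Nat.cast (R := R)) hL
      linear_combination (((n - m).choose k * (n - m - k).choose r : R) *
        a₁ ^ (m - (2 * k + r)) * a₂ ^ r * a₃ ^ (2 * m - n - (m - (2 * k + r))) *
        a₄ ^ (n - m - k - r)) * hL'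
    · simp

theorem cast_bCoeff (a₁ a₂ a₃ a₄ : ℤ) (n : ℕ) :
    (bCoeff a₁ a₂ a₃ a₄ n : R) = hasseCoeff (a₁ : R) a₂ a₃ a₄ n := by
  simp only [bCoeff, hasseCoeff, Polynomial.coeff_quadratic_pow_mul_linear_pow]
  push_cast
  symm
  rw [← sum_subset (fun m hm => by simp at hm ⊢; omega : Icc (n / 2) n ⊆ range (n + 1))]
  · refine sum_congr rfl fun m hm => ?_
    have hmn : m ≤ n := (mem_Icc.1 hm).2
    rw [mul_sum, sum_subset (fun k hk => by simp at hk ⊢; omega :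
        range (n - m + 1) ⊆ range (n + 1)),
      sum_subset (fun k hk => by simp at hk ⊢; omega : range (m / 2 + 1) ⊆ range (n + 1))]
    · refine sum_congr rfl fun k hk => ?_
      by_cases hkw : k ≤ n - m
      · rw [show n + 1 - m - k = n - m - k + 1 by omega, mul_sum]
        exact sum_congr rfl fun r hr => hasseCoeff_term_eq _ _ _ _ hmn (by simp at hr; omega)
      · rw [Nat.choose_eq_zero_of_lt (not_le.1 hkw), show n + 1 - m - k = 0 by omega]
        simp
    · intro k _ hk
      have : m.choose k * (m - k).choose k = 0 := by
        simp only [mul_eq_zero, Nat.choose_eq_zero_iff]; simp at hk; omega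
      simp [← Nat.cast_mul, this]
    · intro k _ hk
      rw [Nat.choose_eq_zero_of_lt (n := n - m) (k := k) (by simp at hk; omega)]
      simp
  · intro m hm hm'
    rw [Nat.choose_eq_zero_of_lt (n := m) (k := n - m) (by simp at hm hm'; omega)]
    simp

end hasseCoeff

namespace FiniteField

variable {K : Type*} [Field K] [Fintype K]

theorem sum_pow (i : ℕ) :
    ∑ x : K, x ^ i = if i ≠ 0 ∧ Fintype.card K - 1 ∣ i then -1 else 0 := by
  classical
  rcases eq_or_ne i 0 with rfl | hi
  · simp
  have hunits : ∑ x : K, x ^ i = ∑ x : Kˣ, (x : K) ^ i := by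
    rw [← Fintype.sum_subtype_add_sum_subtype (· ≠ 0),
      Fintype.sum_eq_zero (fun x : {x : K // ¬x ≠ 0} => (x : K) ^ i)
        fun x => by simp [not_not.1 x.2, hi], add_zero]
    exact (Fintype.sum_equiv unitsEquivNeZero _ _ fun _ => rfl).symm
  rw [hunits, sum_pow_units]
  simp [hi]

theorem sum_eval_eq_neg_coeff {P : Polynomial K} (hP : P.natDegree ≤ 2 * (Fintype.card K - 1)) :
    ∑ x : K, P.eval x =
      -(P.coeff (Fintype.card K - 1) + P.coeff (2 * (Fintype.card K - 1))) := by
  set n := Fintype.card K - 1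
  have hn : n ≠ 0 := by have := Fintype.one_lt_card (α := K); omega
  have hterm : ∀ i ∈ range (2 * n + 1), P.coeff i * (if i ≠ 0 ∧ n ∣ i then -1 else 0) =
      -((if i = n then P.coeff i else 0) + if i = 2 * n then P.coeff i else 0) := by
    intro i hi
    by_cases h1 : i = n
    · simp [h1, hn]
    by_cases h2 : i = 2 * n
    · simp [h2, hn]
    rw [if_neg, if_neg h1, if_neg h2]
    · simp
    rintro ⟨hi0, d, rfl⟩
    have : d ≤ 2 := Nat.le_of_mul_le_mul_left (by simp at hi; omega) (Nat.pos_of_ne_zero hn)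
    interval_cases d <;> simp_all [mul_comm]
  rw [sum_congr rfl fun x _ => Polynomial.eval_eq_sum_range' (Nat.lt_succ_of_le hP) x, sum_comm]
  simp_rw [← mul_sum, sum_pow]
  rw [sum_congr rfl hterm, sum_neg_distrib, sum_add_distrib, sum_ite_eq', sum_ite_eq']
  simp [show n < 2 * n + 1 by omega]

theorem natCard_eq_card_sub_sum_pow {α : Type*} [Fintype α] (g h : α → K) :
    (Nat.card {a // g a = h a} : K) =
      Fintype.card α - ∑ a, (g a - h a) ^ (Fintype.card K - 1) := by
  classical
  have hq : Fintype.card K - 1 ≠ 0 := by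
    have := Fintype.one_lt_card (α := K); omega
  rw [Nat.card_eq_fintype_card, Fintype.card_subtype, card_filter, Nat.cast_sum,
    ← card_univ, Finset.cast_card, ← sum_sub_distrib]
  refine sum_congr rfl fun a _ => ?_
  by_cases hga : g a = h a
  · simp [hga, zero_pow hq]
  · simp [hga, pow_card_sub_one_eq_one _ (sub_ne_zero.2 hga)]

theorem sub_pow_card_sub_one (u v : K) :
    (u - v) ^ (Fintype.card K - 1) =
      ∑ m ∈ range (Fintype.card K), u ^ m * v ^ (Fintype.card K - 1 - m) := by
  rcases eq_or_ne u v with rfl | huv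
  · have hq : Fintype.card K - 1 ≠ 0 := by
      have := Fintype.one_lt_card (α := K); omega
    rw [sub_self, zero_pow hq, sum_congr rfl fun m hm => by
      rw [← pow_add, Nat.add_sub_cancel' (by simp at hm; omega)]]
    simp
  · have := geom_sum₂_mul u v (Fintype.card K)
    rw [pow_card, pow_card] at this
    rw [pow_card_sub_one_eq_one _ (sub_ne_zero.2 huv)]
    exact (mul_left_eq_self₀.1 this).resolve_right (sub_ne_zero.2 huv) |>.symm

theorem sum_mul_add_pow (c : K) {m : ℕ} (hm : m ≤ Fintype.card K - 1) :
    ∑ y : K, (y * (y + c)) ^ m = -((m.choose (Fintype.card K - 1 - m) : K) *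
      c ^ (2 * m - (Fintype.card K - 1)) + if m = Fintype.card K - 1 then 1 else 0) := by
  set n := Fintype.card K - 1 with hn
  have hdeg : (Polynomial.X ^ m * (Polynomial.X + Polynomial.C c) ^ m).natDegree ≤ 2 * n := by
    compute_degree
    omega
  have := sum_eval_eq_neg_coeff hdeg
  rw [← hn] at this
  simp only [Polynomial.eval_mul, Polynomial.eval_pow, Polynomial.eval_X, Polynomial.eval_add,
    Polynomial.eval_C] at this
  simp_rw [mul_pow]
  rw [this, Polynomial.coeff_X_pow_mul', Polynomial.coeff_X_pow_mul',
    Polynomial.coeff_X_add_C_pow, Polynomial.coeff_X_add_C_pow, if_pos hm, if_pos (by omega)]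
  rcases eq_or_lt_of_le hm with rfl | hlt
  · simp [two_mul]
  · rw [Nat.choose_eq_zero_of_lt (by omega : m < 2 * n - m), if_neg hlt.ne,
      show m - (n - m) = 2 * m - n by omega]
    simp [mul_comm]

theorem sum_cubic_pow_mul_linear_pow (a₁ a₂ a₃ a₄ : K) {m : ℕ}
    (hm : m ≤ Fintype.card K - 1) (hm' : Fintype.card K - 1 ≤ 2 * m) :
    ∑ x : K, (x * (x ^ 2 + a₂ * x + a₄)) ^ (Fintype.card K - 1 - m) *
        (a₁ * x + a₃) ^ (2 * m - (Fintype.card K - 1)) =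
      -((Polynomial.X ^ 2 + Polynomial.C a₂ * Polynomial.X + Polynomial.C a₄) ^
          (Fintype.card K - 1 - m) *
        (Polynomial.C a₁ * Polynomial.X + Polynomial.C a₃) ^ (2 * m - (Fintype.card K - 1))).coeff
          m := by
  set n := Fintype.card K - 1 with hn
  have hn1 : 1 ≤ n := by have := Fintype.one_lt_card (α := K); omega
  set P := (Polynomial.X ^ 2 + Polynomial.C a₂ * Polynomial.X + Polynomial.C a₄) ^ (n - m) *
    (Polynomial.C a₁ * Polynomial.X + Polynomial.C a₃) ^ (2 * m - n)
  have hdeg : (Polynomial.X ^ (n - m) * P).natDegree < 2 * n := by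
    refine lt_of_le_of_lt (b := n - m + (2 * (n - m) + (2 * m - n))) ?_ (by omega)
    simp only [P]
    compute_degree
    omega
  have := sum_eval_eq_neg_coeff hdeg.le
  rw [← hn, Polynomial.coeff_eq_zero_of_natDegree_lt hdeg, Polynomial.coeff_X_pow_mul',
    if_pos (by omega), show n - (n - m) = m by omega, add_zero] at this
  rw [← this]
  simp [P, mul_pow, mul_assoc]

theorem sum_weierstrass_pow (a₁ a₂ a₃ a₄ : K) :
    ∑ x : K, ∑ y : K, (y ^ 2 + a₁ * x * y + a₃ * y - (x ^ 3 + a₂ * x ^ 2 + a₄ * x)) ^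
      (Fintype.card K - 1) = hasseCoeff a₁ a₂ a₃ a₄ (Fintype.card K - 1) := by
  have hq : Fintype.card K = Fintype.card K - 1 + 1 := by
    have := Fintype.one_lt_card (α := K); omega
  set n := Fintype.card K - 1
  calc ∑ x : K, ∑ y : K, (y ^ 2 + a₁ * x * y + a₃ * y - (x ^ 3 + a₂ * x ^ 2 + a₄ * x)) ^ n
      = ∑ x : K, ∑ y : K, ∑ m ∈ range (n + 1),
          (y * (y + (a₁ * x + a₃))) ^ m * (x * (x ^ 2 + a₂ * x + a₄)) ^ (n - m) := by
        refine sum_congr rfl fun x _ => sum_congr rfl fun y _ => ?_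
        rw [← hq, ← sub_pow_card_sub_one]
        ring
    _ = ∑ m ∈ range (n + 1), ∑ x : K, (x * (x ^ 2 + a₂ * x + a₄)) ^ (n - m) *
          ∑ y : K, (y * (y + (a₁ * x + a₃))) ^ m := by
        rw [sum_congr rfl fun x _ => sum_comm, sum_comm]
        simp_rw [mul_sum, mul_comm]
    _ = ∑ m ∈ range (n + 1), ∑ x : K, (x * (x ^ 2 + a₂ * x + a₄)) ^ (n - m) *
          -((m.choose (n - m) : K) * (a₁ * x + a₃) ^ (2 * m - n) + if m = n then 1 else 0) := by
        refine sum_congr rfl fun m hm => sum_congr rfl fun x _ => ?_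
        rw [sum_mul_add_pow _ (by simp at hm; omega)]
    _ = hasseCoeff a₁ a₂ a₃ a₄ n := by
        refine sum_congr rfl fun m hm => ?_
        have hmn : m ≤ n := by simp at hm; omega
        by_cases hm' : n ≤ 2 * m
        · rw [← neg_neg (Polynomial.coeff _ m), ← sum_cubic_pow_mul_linear_pow a₁ a₂ a₃ a₄ hmn hm']
          split_ifs with h
          · simp [h, n, mul_sum, mul_add, sum_add_distrib]
          · simp [n, mul_sum, mul_comm, mul_left_comm]
        · rw [Nat.choose_eq_zero_of_lt (by omega), if_neg (by omega)]
          simp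

end FiniteField

theorem stmt5_general (a₁ a₂ a₃ a₄ : ℤ)
    (p : ℕ) (hp : p.Prime)
    (b : ℕ → ℤ) (hb : ∀ n : ℕ, 1 ≤ n → b n = bCoeff a₁ a₂ a₃ a₄ (n - 1))
    (Ap : ℕ)
    (hAp : Ap = 1 + Nat.card {P : ZMod p × ZMod p //
      P.2 ^ 2 + (a₁ : ZMod p) * P.1 * P.2 + (a₃ : ZMod p) * P.2 =
        P.1 ^ 3 + (a₂ : ZMod p) * P.1 ^ 2 + (a₄ : ZMod p) * P.1})
    (tp : ℤ) (htp : tp = 1 + (p : ℤ) - (Ap : ℤ)) :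
    b p ≡ tp [ZMOD p] := by
  have := Fact.mk hp
  have hcount := FiniteField.natCard_eq_card_sub_sum_pow
    (fun P : ZMod p × ZMod p => P.2 ^ 2 + (a₁ : ZMod p) * P.1 * P.2 + (a₃ : ZMod p) * P.2)
    (fun P => P.1 ^ 3 + (a₂ : ZMod p) * P.1 ^ 2 + (a₄ : ZMod p) * P.1)
  simp only [Fintype.sum_prod_type] at hcount
  rw [FiniteField.sum_weierstrass_pow, Fintype.card_prod, ZMod.card] at hcount
  rw [← ZMod.intCast_eq_intCast_iff, hb p hp.one_lt.le, htp, hAp, cast_bCoeff]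
  push_cast
  rw [hcount]
  push_cast [ZMod.natCast_self]
  ring

theorem stmt5 (a₁ a₂ a₃ a₄ : ℤ)
    (hΔ : (WeierstrassCurve.mk a₁ a₂ a₃ a₄ 0).Δ ≠ 0)
    (p : ℕ) (hp : p.Prime) (hpΔ : ¬ ((p : ℤ) ∣ (WeierstrassCurve.mk a₁ a₂ a₃ a₄ 0).Δ))
    (b : ℕ → ℤ) (hb : ∀ n : ℕ, 1 ≤ n → b n = bCoeff a₁ a₂ a₃ a₄ (n - 1))
    (Ap : ℕ)
    (hAp : Ap = 1 + Nat.card {P : ZMod p × ZMod p //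
      P.2 ^ 2 + (a₁ : ZMod p) * P.1 * P.2 + (a₃ : ZMod p) * P.2 =
        P.1 ^ 3 + (a₂ : ZMod p) * P.1 ^ 2 + (a₄ : ZMod p) * P.1})
    (tp : ℤ) (htp : tp = 1 + (p : ℤ) - (Ap : ℤ)) :
    b p ≡ tp [ZMOD p] :=
  stmt5_general a₁ a₂ a₃ a₄ p hp b hb Ap hAp tp htp
end

section
/- Let a be a nonzero integer and p a prime with p ∤ 2a. Set A_p = 1 + #{(x,y) ∈ 𝔽_p × 𝔽_p : y² = x³ + ax} and t_p = 1 + p − A_p. If p ≡ 3 (mod 4), then t_p = 0. -/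
/-! Writing χ for the quadratic character, `y² = c` has `1 + χ c` solutions, so the curve
`y² = f x` has `q + ∑ₓ χ (f x)` affine points over `𝔽_q`. For `f x = x³ + a x` the summand is odd
in `x` as soon as `χ (-1) = -1`, i.e. `q ≡ 3 (mod 4)`; the sum then vanishes and `A_p = p + 1`. -/

open Finset

variable {F : Type*} [Field F] [Fintype F]

theorem ringChar_ne_two_of_card_mod_four_eq_three (hF : Fintype.card F % 4 = 3) :
    ringChar F ≠ 2 := by
  rw [Ne, FiniteField.even_card_iff_char_two]
  omega

theorem quadraticChar_neg_one_of_card_mod_four_eq_three [DecidableEq F]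
    (hF : Fintype.card F % 4 = 3) : quadraticChar F (-1) = -1 := by
  rw [quadraticChar_neg_one (ringChar_ne_two_of_card_mod_four_eq_three hF)]
  exact ZMod.χ₄_nat_three_mod_four hF

theorem sum_quadraticChar_comp_eq_zero_of_odd [DecidableEq F] (hF : Fintype.card F % 4 = 3)
    (f : F → F) (hf : ∀ x, f (-x) = -f x) : ∑ x, quadraticChar F (f x) = 0 := by
  have hneg (x : F) : quadraticChar F (f (-x)) = -quadraticChar F (f x) := by
    rw [hf, neg_eq_neg_one_mul, map_mul, quadraticChar_neg_one_of_card_mod_four_eq_three hF,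
      neg_one_mul]
  have hinv : ∑ x, quadraticChar F (f (-x)) = ∑ x, quadraticChar F (f x) :=
    Fintype.sum_equiv (Equiv.neg F) _ _ fun _ => rfl
  rw [Fintype.sum_congr _ _ hneg, sum_neg_distrib] at hinv
  linarith

theorem natCard_sq_eq_card_add_sum_quadraticChar [DecidableEq F] (hF : ringChar F ≠ 2)
    (f : F → F) :
    (Nat.card {P : F × F // P.2 ^ 2 = f P.1} : ℤ) =
      Fintype.card F + ∑ x, quadraticChar F (f x) := by
  have hfiber (x : F) : (Nat.card {y : F // y ^ 2 = f x} : ℤ) = quadraticChar F (f x) + 1 := by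
    rw [← quadraticChar_card_sqrts hF, Set.toFinset_card, Nat.card_eq_fintype_card]
    rfl
  rw [Nat.card_congr (Equiv.subtypeProdEquivSigmaSubtype fun x y => y ^ 2 = f x),
    Nat.card_sigma, Nat.cast_sum]
  simp only [hfiber, sum_add_distrib, sum_const, card_univ, nsmul_eq_mul, mul_one]
  ring

theorem natCard_sq_eq_of_odd [DecidableEq F] (hF : Fintype.card F % 4 = 3)
    (f : F → F) (hf : ∀ x, f (-x) = -f x) :
    Nat.card {P : F × F // P.2 ^ 2 = f P.1} = Fintype.card F := by
  have h :=
    natCard_sq_eq_card_add_sum_quadraticChar (ringChar_ne_two_of_card_mod_four_eq_three hF) f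
  rw [sum_quadraticChar_comp_eq_zero_of_odd hF f hf, add_zero] at h
  exact_mod_cast h

theorem stmt9_general (a : ℤ) (p : ℕ) (hp : p.Prime)
    (hp4 : p % 4 = 3)
    (Ap : ℕ)
    (hAp : Ap = 1 + Nat.card {P : ZMod p × ZMod p //
      P.2 ^ 2 = P.1 ^ 3 + (a : ZMod p) * P.1})
    (tp : ℤ) (htp : tp = 1 + (p : ℤ) - (Ap : ℤ)) :
    tp = 0 := by
  have : Fact p.Prime := ⟨hp⟩
  have hF : Fintype.card (ZMod p) % 4 = 3 := by rwa [ZMod.card]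
  have hcard : Nat.card {P : ZMod p × ZMod p // P.2 ^ 2 = P.1 ^ 3 + (a : ZMod p) * P.1} = p :=
    (natCard_sq_eq_of_odd hF (fun x => x ^ 3 + (a : ZMod p) * x) fun x => by ring).trans
      (ZMod.card p)
  rw [htp, hAp, hcard]
  push_cast
  ring

theorem stmt9 (a : ℤ) (ha : a ≠ 0) (p : ℕ) (hp : p.Prime)
    (hpa : ¬ ((p : ℤ) ∣ 2 * a)) (hp4 : p % 4 = 3)
    (Ap : ℕ)
    (hAp : Ap = 1 + Nat.card {P : ZMod p × ZMod p //
      P.2 ^ 2 = P.1 ^ 3 + (a : ZMod p) * P.1})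
    (tp : ℤ) (htp : tp = 1 + (p : ℤ) - (Ap : ℤ)) :
    tp = 0 :=
  stmt9_general a p hp hp4 Ap hAp tp htp
end

section
/- Let a be a nonzero integer and p a prime with p ∤ 2a and p ≡ 1 (mod 4). Set A_p = 1 + #{(x,y) ∈ 𝔽_p × 𝔽_p : y² = x³ + ax} and t_p = 1 + p − A_p. Then t_p ≡ C((p−1)/2, (p−1)/4) · a^{(p−1)/4} (mod p). -/
/-!
Over a finite field `K` of odd order `q`, Euler's criterion gives
`#{y | y ^ 2 = c} = c ^ (q / 2) + 1` in `K`, so the number of affine points of `y ^ 2 = f x` is `∑ x, f x ^ (q / 2)` modulo the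
characteristic. For `f x = x ^ 3 + b x = x (x ^ 2 + b)` the binomial theorem turns this into a
combination of power sums `∑ x, x ^ n`, which vanish unless `q - 1 ∣ n`; when `q = 4 t + 1` only the
term with `n = q - 1` survives, contributing `-C(2t, t) b ^ t`.
-/

open Finset

namespace FiniteField

variable {K : Type*} [Field K] [Fintype K]

theorem sum_pow_of_ne_zero [DecidableEq K] {i : ℕ} (hi : i ≠ 0) :
    ∑ x : K, x ^ i = if Fintype.card K - 1 ∣ i then -1 else 0 := by
  rw [← sum_pow_units K i, Fintype.sum_eq_add_sum_compl 0, zero_pow hi, zero_add,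
    ← Fintype.sum_equiv unitsEquivNeZero.symm (fun x : {x : K // x ≠ 0} => (x : K) ^ i)
      _ (fun _ => rfl)]
  exact sum_subtype _ (by simp) _

theorem cast_card_sqrts [DecidableEq K] (hK : ringChar K ≠ 2) (c : K) :
    (#{y : K | y ^ 2 = c} : K) = c ^ (Fintype.card K / 2) + 1 := by
  have h := quadraticChar_card_sqrts hK c
  rw [Set.toFinset_ofPred] at h
  rw [← quadraticChar_eq_pow_of_char_ne_two' hK]
  exact_mod_cast congrArg (Int.cast : ℤ → K) h

theorem cast_card_graph_sq (hK : ringChar K ≠ 2) (f : K → K) :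
    (Nat.card {P : K × K // P.2 ^ 2 = f P.1} : K) = ∑ x, f x ^ (Fintype.card K / 2) := by
  classical
  calc (Nat.card {P : K × K // P.2 ^ 2 = f P.1} : K)
      = ∑ x : K, (#{y : K | y ^ 2 = f x} : K) := by
        simp only [Nat.card_eq_fintype_card, Fintype.card_subtype, ← sum_boole,
          Fintype.sum_prod_type]
    _ = ∑ x, (f x ^ (Fintype.card K / 2) + 1) := by simp only [cast_card_sqrts hK]
    _ = ∑ x, f x ^ (Fintype.card K / 2) := by
        rw [sum_add_distrib, sum_const, card_univ, nsmul_one, cast_card_eq_zero, add_zero]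

theorem sum_cube_add_mul_pow_card_div_two (hK : Fintype.card K % 4 = 1) (b : K) :
    ∑ x : K, (x ^ 3 + b * x) ^ (Fintype.card K / 2)
      = -(((Fintype.card K - 1) / 2).choose ((Fintype.card K - 1) / 4) *
          b ^ ((Fintype.card K - 1) / 4)) := by
  classical
  set q := Fintype.card K
  set t := (q - 1) / 4
  set m := (q - 1) / 2
  have ht : 1 ≤ t := by have := Fintype.one_lt_card (α := K); omega
  have hqm : q / 2 = m := by omega
  have hmt : m = 2 * t := by omega
  have hqt : q - 1 = 4 * t := by omega
  have hdvd : ∀ k ∈ range (m + 1), q - 1 ∣ m + 2 * k ↔ k = t := by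
    intro k hk
    rw [mem_range] at hk
    constructor
    · rintro ⟨j, hj⟩
      have hj2 : j < 2 := by nlinarith
      interval_cases j <;> omega
    · rintro rfl
      exact ⟨1, by omega⟩
  calc ∑ x : K, (x ^ 3 + b * x) ^ (q / 2)
      = ∑ x : K, ∑ k ∈ range (m + 1), b ^ (m - k) * m.choose k * x ^ (m + 2 * k) := by
        refine sum_congr rfl fun x _ => ?_
        rw [hqm, show x ^ 3 + b * x = x * (x ^ 2 + b) by ring, mul_pow, add_pow, mul_sum]
        refine sum_congr rfl fun k _ => ?_
        ring
    _ = ∑ k ∈ range (m + 1), b ^ (m - k) * m.choose k * ∑ x : K, x ^ (m + 2 * k) := by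
        rw [sum_comm]
        simp only [mul_sum]
    _ = ∑ k ∈ range (m + 1), if k = t then -(b ^ (m - k) * m.choose k) else 0 := by
        refine sum_congr rfl fun k hk => ?_
        rw [sum_pow_of_ne_zero (by omega), if_congr (hdvd k hk) rfl rfl]
        split_ifs <;> ring
    _ = -(m.choose t * b ^ t) := by
        rw [sum_ite_eq' (range (m + 1)) t, if_pos (mem_range.mpr (by omega)),
          show m - t = t by omega, mul_comm]

end FiniteField

theorem stmt10_general (a : ℤ) (p : ℕ) (hp : p.Prime)
    (hp4 : p % 4 = 1)
    (Ap : ℕ)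
    (hAp : Ap = 1 + Nat.card {P : ZMod p × ZMod p //
      P.2 ^ 2 = P.1 ^ 3 + (a : ZMod p) * P.1})
    (tp : ℤ) (htp : tp = 1 + (p : ℤ) - (Ap : ℤ)) :
    tp ≡ (((p - 1) / 2).choose ((p - 1) / 4) : ℤ) * a ^ ((p - 1) / 4) [ZMOD p] := by
  have : Fact p.Prime := ⟨hp⟩
  have hchar : ringChar (ZMod p) ≠ 2 := by rw [ZMod.ringChar_zmod_n]; omega
  have hcount := FiniteField.cast_card_graph_sq hchar fun x => x ^ 3 + (a : ZMod p) * x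
  rw [FiniteField.sum_cube_add_mul_pow_card_div_two (by rwa [ZMod.card]), ZMod.card] at hcount
  rw [← ZMod.intCast_eq_intCast_iff, htp, hAp]
  push_cast
  rw [hcount, ZMod.natCast_self]
  ring

theorem stmt10 (a : ℤ) (ha : a ≠ 0) (p : ℕ) (hp : p.Prime)
    (hpa : ¬ ((p : ℤ) ∣ 2 * a)) (hp4 : p % 4 = 1)
    (Ap : ℕ)
    (hAp : Ap = 1 + Nat.card {P : ZMod p × ZMod p //
      P.2 ^ 2 = P.1 ^ 3 + (a : ZMod p) * P.1})
    (tp : ℤ) (htp : tp = 1 + (p : ℤ) - (Ap : ℤ)) :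
    tp ≡ (((p - 1) / 2).choose ((p - 1) / 4) : ℤ) * a ^ ((p - 1) / 4) [ZMOD p] :=
  stmt10_general a p hp hp4 Ap hAp tp htp
end

section
/- Let p be an odd prime with p ≡ 1 (mod 4) and let n be a positive integer with n ≡ 1 (mod 4) and p ∤ n. Then C((np−1)/2, (np−1)/4) ≡ C((n−1)/2, (n−1)/4) · C((p−1)/2, (p−1)/4) (mod p). -/
/-! Since `n * p - 1 = (p - 1) + p * (n - 1)`, the numbers `(n * p - 1) / 2` and `(n * p - 1) / 4`
have last base-`p` digit `(p - 1) / 2`, resp. `(p - 1) / 4`, and leading part `(n - 1) / 2`,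
resp. `(n - 1) / 4`; the congruence is then one step of Lucas's theorem. -/

theorem Nat.mul_sub_one_div_eq_sub_one_div_add {n p d : ℕ} (hn : 0 < n) (hdn : d ∣ n - 1)
    (hdp : d ∣ p - 1) : (n * p - 1) / d = (p - 1) / d + p * ((n - 1) / d) := by
  have hsplit : n * p - 1 = (p - 1) + p * (n - 1) := by
    obtain ⟨m, rfl⟩ := Nat.exists_eq_add_one_of_ne_zero hn.ne'
    grind
  rw [hsplit, Nat.add_div_of_dvd_right hdp, Nat.mul_div_assoc p hdn]

theorem Choose.choose_add_mul_modEq_nat {p r s m k : ℕ} [Fact p.Prime] (hr : r < p) (hs : s < p) :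
    (r + p * m).choose (s + p * k) ≡ m.choose k * r.choose s [MOD p] := by
  have hp : 0 < p := Nat.pos_of_neZero p
  have := Choose.choose_modEq_choose_mod_mul_choose_div_nat
    (p := p) (n := r + p * m) (k := s + p * k)
  rwa [Nat.add_mul_mod_self_left, Nat.add_mul_mod_self_left, Nat.mod_eq_of_lt hr,
    Nat.mod_eq_of_lt hs, Nat.add_mul_div_left _ _ hp, Nat.add_mul_div_left _ _ hp,
    Nat.div_eq_of_lt hr, Nat.div_eq_of_lt hs, zero_add, zero_add, mul_comm (r.choose s)] at this

theorem stmt11_general (p : ℕ) (hp : p.Prime) (hp4 : p % 4 = 1)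
    (n : ℕ) (hn : 0 < n) (hn4 : n % 4 = 1) :
    ((n * p - 1) / 2).choose ((n * p - 1) / 4) ≡
      ((n - 1) / 2).choose ((n - 1) / 4) * ((p - 1) / 2).choose ((p - 1) / 4) [MOD p] := by
  have := Fact.mk hp
  rw [Nat.mul_sub_one_div_eq_sub_one_div_add hn (by omega) (by omega),
    Nat.mul_sub_one_div_eq_sub_one_div_add hn (by omega) (by omega)]
  exact Choose.choose_add_mul_modEq_nat (by omega) (by omega)

theorem stmt11 (p : ℕ) (hp : p.Prime) (hp4 : p % 4 = 1)
    (n : ℕ) (hn : 0 < n) (hn4 : n % 4 = 1) (hpn : ¬ p ∣ n) :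
    ((n * p - 1) / 2).choose ((n * p - 1) / 4) ≡
      ((n - 1) / 2).choose ((n - 1) / 4) * ((p - 1) / 2).choose ((p - 1) / 4) [MOD p] :=
  stmt11_general p hp hp4 n hn hn4
end

section
/- Let a₃, a₆ be integers and let w ∈ ℚ⟦z⟧ be the unique formal power series with zero constant term satisfying w = z³ + a₃w² + a₆w³. Then w ∈ ℤ⟦z⟧, the coefficient of z^{m} in w is 0 whenever 3 ∤ m, and for every n ≥ 1, n · [z^{3n}] w = Σ_{k=⌊(n−1)/2⌋}^{n−1} C(n+k−1, k)·C(k, n−k−1) · a₃^{2k−n+1} a₆^{n−1−k}. -/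
/-!
The map `f ↦ X³ + a₃ f² + a₆ f³` is an `X`-adic contraction on series without constant term, so
`w` is the limit of its iterates starting at `0`. Each iterate is the image of an integral power
series in `X³`, which gives the integrality of `w` and the vanishing of its coefficients off `3ℕ`.

Hence `w(z) = W(z³)` with `W = X + a₃ W² + a₆ W³`, i.e. `W = X φ(W)` for
`φ(x) = 1 / (1 - a₃ x - a₆ x²)`. Lagrange inversion `n [Xⁿ] Wᵏ = k [Xⁿ⁻ᵏ] φⁿ` follows by
induction on `k + 2 (n - k)`, comparing the recursion `Wᵏ⁺¹ = X Wᵏ + a₃ Wᵏ⁺² + a₆ Wᵏ⁺³` with two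
recursions for the coefficients of `φⁿ`: one from `(1 - a₃ x - a₆ x²) φⁿ⁺¹ = φⁿ`, one from
differentiating `φⁿ`. Finally `φⁿ = ∑ⱼ C(n + j - 1, j) (a₃ x + a₆ x²)ʲ` gives the binomial sum.
-/

open PowerSeries Finset

namespace PowerSeries

section Auxiliary

variable {R : Type*} [CommSemiring R]

lemma coeff_pow_eq_zero_of_lt {W : R⟦X⟧} (hW : X ∣ W) {n k : ℕ} (h : n < k) :
    coeff n (W ^ k) = 0 :=
  X_pow_dvd_iff.mp (pow_dvd_pow_of_dvd hW k) n h

lemma coeff_X_mul_derivative (f : R⟦X⟧) (j : ℕ) :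
    coeff j (X * d⁄dX R f) = j * coeff j f := by
  cases j with
  | zero => simp
  | succ j => rw [coeff_succ_X_mul, coeff_derivative]; push_cast; ring

end Auxiliary

section CubicStep

variable {R S : Type*} [CommRing R] [CommRing S]

noncomputable def cubicStep (c : R⟦X⟧) (a b : R) (f : R⟦X⟧) : R⟦X⟧ :=
  c + C a * f ^ 2 + C b * f ^ 3

variable {c : R⟦X⟧} {a b : R}

lemma X_dvd_cubicStep (hc : X ∣ c) {f : R⟦X⟧} (hf : X ∣ f) : X ∣ cubicStep c a b f := by
  obtain ⟨c', rfl⟩ := hc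
  obtain ⟨f', rfl⟩ := hf
  exact ⟨c' + C a * X * f' ^ 2 + C b * X ^ 2 * f' ^ 3, by unfold cubicStep; ring⟩

lemma X_pow_succ_dvd_cubicStep_sub {f g : R⟦X⟧} {j : ℕ} (hf : X ∣ f) (hg : X ∣ g)
    (h : X ^ j ∣ f - g) : X ^ (j + 1) ∣ cubicStep c a b f - cubicStep c a b g := by
  obtain ⟨f', rfl⟩ := hf
  obtain ⟨g', rfl⟩ := hg
  have hfactor : cubicStep c a b (X * f') - cubicStep c a b (X * g') =
      (X * f' - X * g') * (X * (C a * (f' + g') + C b * X * (f' ^ 2 + f' * g' + g' ^ 2))) := by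
    unfold cubicStep; ring
  rw [hfactor, pow_succ]
  exact mul_dvd_mul h (dvd_mul_right _ _)

lemma X_pow_dvd_iterate_cubicStep_sub (hc : X ∣ c) {w : R⟦X⟧} (hw : X ∣ w)
    (hfix : cubicStep c a b w = w) (j : ℕ) : X ^ j ∣ (cubicStep c a b)^[j] 0 - w := by
  induction j with
  | zero => simp
  | succ j ih =>
    have hmaps : Set.MapsTo (cubicStep c a b) {f | X ∣ f} {f | X ∣ f} :=
      fun _ hf => X_dvd_cubicStep hc hf
    rw [Function.iterate_succ_apply', ← hfix]
    exact X_pow_succ_dvd_cubicStep_sub (hmaps.iterate j (dvd_zero X)) hw ih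

lemma coeff_iterate_cubicStep (hc : X ∣ c) {w : R⟦X⟧} (hw : X ∣ w)
    (hfix : cubicStep c a b w = w) (m : ℕ) :
    coeff m ((cubicStep c a b)^[m + 1] 0) = coeff m w := by
  have := X_pow_dvd_iff.mp (X_pow_dvd_iterate_cubicStep_sub hc hw hfix (m + 1)) m m.lt_succ_self
  rwa [map_sub, sub_eq_zero] at this

lemma map_cubicStep (φ : R →+* S) (f : R⟦X⟧) :
    map φ (cubicStep c a b f) = cubicStep (map φ c) (φ a) (φ b) (map φ f) := by
  simp [cubicStep]

lemma expand_cubicStep (p : ℕ) (hp : p ≠ 0) (f : R⟦X⟧) :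
    expand p hp (cubicStep c a b f) = cubicStep (expand p hp c) a b (expand p hp f) := by
  simp [cubicStep, expand_C]

lemma coeff_eq_map_coeff_expand (φ : R →+* S) {p : ℕ} (hp : p ≠ 0) {w : S⟦X⟧}
    (hw : X ∣ w) (hfix : cubicStep (X ^ p) (φ a) (φ b) w = w) (m : ℕ) :
    coeff m w = φ (coeff m (expand p hp ((cubicStep X a b)^[m + 1] 0))) := by
  have hsemi : Function.Semiconj (fun f => map φ (expand p hp f)) (cubicStep X a b)
      (cubicStep (X ^ p) (φ a) (φ b)) := fun f => by
    simp only [expand_cubicStep, expand_X, map_cubicStep, map_pow, map_X]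
  have := hsemi.iterate_right (m + 1) 0
  simp only [map_zero] at this
  rw [← coeff_map, this, coeff_iterate_cubicStep (dvd_pow_self X hp) hw hfix]

end CubicStep

section Expand

variable {R : Type*} [CommRing R] {p : ℕ} (hp : p ≠ 0)

lemma expand_injective : Function.Injective (expand p hp (R := R)) := fun f g h => by
  ext n
  simpa using congrArg (coeff (p * n)) h

lemma expand_mk_coeff_mul {w : R⟦X⟧} (hw : ∀ m, ¬ p ∣ m → coeff m w = 0) :
    expand p hp (mk fun n => coeff (p * n) w) = w := by
  ext m
  rw [coeff_expand]
  split_ifs with h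
  · obtain ⟨n, rfl⟩ := h
    rw [coeff_mk, Nat.mul_div_cancel_left _ (Nat.pos_of_ne_zero hp)]
  · exact (hw m h).symm

lemma exists_expand_eq_cubicStep {a b : R} {w : R⟦X⟧} (hw : X ∣ w)
    (hfix : cubicStep (X ^ p) a b w = w) (hsupp : ∀ m, ¬ p ∣ m → coeff m w = 0) :
    ∃ W, expand p hp W = w ∧ X ∣ W ∧ cubicStep X a b W = W := by
  have hexp := expand_mk_coeff_mul hp hsupp
  refine ⟨_, hexp, X_dvd_iff.mpr ?_, expand_injective hp ?_⟩
  · rw [← constantCoeff_expand p hp, hexp, X_dvd_iff.mp hw]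
  · rw [expand_cubicStep, expand_X, hexp, hfix]

end Expand

section LagrangePhi

variable {K : Type*} [Field K] (a b : K)

noncomputable def lagrangePhi : K⟦X⟧ := (1 - C a * X - C b * X ^ 2)⁻¹

lemma one_sub_mul_lagrangePhi : (1 - C a * X - C b * X ^ 2) * lagrangePhi a b = 1 :=
  PowerSeries.mul_inv_cancel _ (by simp)

lemma constantCoeff_lagrangePhi : constantCoeff (lagrangePhi a b) = 1 := by
  simp [lagrangePhi]

lemma coeff_add_two_lagrangePhi_pow_succ (n m : ℕ) :
    coeff (m + 2) (lagrangePhi a b ^ (n + 1)) = coeff (m + 2) (lagrangePhi a b ^ n)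
      + a * coeff (m + 1) (lagrangePhi a b ^ (n + 1))
      + b * coeff m (lagrangePhi a b ^ (n + 1)) := by
  have h : lagrangePhi a b ^ n = lagrangePhi a b ^ (n + 1)
      - X * (C a * lagrangePhi a b ^ (n + 1)) - X * (X * (C b * lagrangePhi a b ^ (n + 1))) := by
    linear_combination lagrangePhi a b ^ n * (one_sub_mul_lagrangePhi a b).symm
  rw [h, map_sub, map_sub, coeff_succ_X_mul, coeff_succ_X_mul, coeff_succ_X_mul, coeff_C_mul,
    coeff_C_mul]
  ring

lemma derivative_one_sub_C_mul_X_sub_C_mul_X_sq :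
    d⁄dX K (1 - C a * X - C b * X ^ 2) = -(C a + C (2 * b) * X) := by
  simp only [map_sub, Derivation.map_one_eq_zero, Derivation.leibniz, derivative_X, smul_eq_mul,
    derivative_C, Derivation.leibniz_pow, nsmul_eq_mul, map_mul, map_ofNat]
  ring

/-- `(1 - a X - b X²) X (φⁿ)' = n (a X + 2 b X²) φⁿ`, solved for `X (φⁿ)'` so that
coefficients can be read off. -/
lemma X_mul_derivative_lagrangePhi_pow (n : ℕ) :
    X * d⁄dX K (lagrangePhi a b ^ n) =
      X * (C a * (X * d⁄dX K (lagrangePhi a b ^ n)))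
        + X ^ 2 * (C b * (X * d⁄dX K (lagrangePhi a b ^ n)))
        + X * (C (n * a) * lagrangePhi a b ^ n)
        + X ^ 2 * (C (2 * n * b) * lagrangePhi a b ^ n) := by
  cases n with
  | zero => simp
  | succ n =>
    rw [derivative_pow, lagrangePhi, derivative_inv', derivative_one_sub_C_mul_X_sub_C_mul_X_sq,
      ← lagrangePhi]
    simp only [map_mul, map_natCast, show C (2 : K) = 2 from map_ofNat C 2]
    push_cast
    linear_combination ((n + 1 : K⟦X⟧) * X * (C a + 2 * C b * X) * lagrangePhi a b ^ (n + 1)) *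
      one_sub_mul_lagrangePhi a b

lemma coeff_one_lagrangePhi_pow (n : ℕ) : coeff 1 (lagrangePhi a b ^ n) = n * a := by
  have h := congrArg (coeff 1) (X_mul_derivative_lagrangePhi_pow a b n)
  have hθ := coeff_X_mul_derivative (lagrangePhi a b ^ n)
  generalize X * d⁄dX K (lagrangePhi a b ^ n) = θ at h hθ
  simp only [map_add, coeff_succ_X_mul, coeff_X_pow_mul', coeff_C_mul, hθ] at h
  norm_num [constantCoeff_lagrangePhi] at h
  exact h

lemma add_two_mul_coeff_add_two_lagrangePhi_pow (n m : ℕ) :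
    (m + 2 : K) * coeff (m + 2) (lagrangePhi a b ^ n) =
      (n + m + 1) * a * coeff (m + 1) (lagrangePhi a b ^ n)
        + (2 * n + m) * b * coeff m (lagrangePhi a b ^ n) := by
  have h := congrArg (coeff (m + 2)) (X_mul_derivative_lagrangePhi_pow a b n)
  have hθ := coeff_X_mul_derivative (lagrangePhi a b ^ n)
  generalize X * d⁄dX K (lagrangePhi a b ^ n) = θ at h hθ
  simp only [map_add, coeff_succ_X_mul, coeff_X_pow_mul', coeff_C_mul, hθ] at h
  norm_num at h
  linear_combination h

lemma coeff_C_mul_X_add_C_mul_X_sq_pow (d m : ℕ) :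
    coeff m ((C a * X + C b * X ^ 2) ^ d) =
      if d ≤ m then (d.choose (m - d) : K) * a ^ (2 * d - m) * b ^ (m - d) else 0 := by
  have h : (C a * X + C b * X ^ 2) ^ d = X ^ d * rescale b ((X + C a) ^ d) := by
    have hC : rescale b (C a) = C a := by
      ext j; rw [coeff_rescale, coeff_C]; split_ifs with hj <;> simp [hj]
    rw [map_pow, map_add, rescale_X, hC, ← mul_pow]; ring
  rw [h, coeff_X_pow_mul']
  split_ifs with hdm
  · rw [coeff_rescale, ← Polynomial.coe_X, ← Polynomial.coe_C, ← Polynomial.coe_add,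
      ← Polynomial.coe_pow, Polynomial.coeff_coe, Polynomial.coeff_X_add_C_pow,
      show d - (m - d) = 2 * d - m by omega]
    ring
  · rfl

lemma lagrangePhi_pow_eq_subst (n : ℕ) :
    lagrangePhi a b ^ n = subst (C a * X + C b * X ^ 2) (invOneSubPow K n : K⟦X⟧) := by
  have hy : HasSubst (C a * X + C b * X ^ 2 : K⟦X⟧) := HasSubst.of_constantCoeff_zero' (by simp)
  have hsub : subst (C a * X + C b * X ^ 2) (invOneSubPow K n : K⟦X⟧) *
      (1 - C a * X - C b * X ^ 2) ^ n = 1 := by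
    have := congrArg (substAlgHom hy) (invOneSubPow K n).val_inv
    rwa [invOneSubPow_inv_eq_one_sub_pow, map_mul, map_pow, map_sub, map_one, coe_substAlgHom,
      subst_X hy, sub_add_eq_sub_sub] at this
  have hp : (1 - C a * X - C b * X ^ 2 : K⟦X⟧) ^ n ≠ 0 :=
    pow_ne_zero _ (left_ne_zero_of_mul_eq_one (one_sub_mul_lagrangePhi a b))
  refine mul_right_cancel₀ hp ?_
  rw [hsub, ← mul_pow, mul_comm, one_sub_mul_lagrangePhi, one_pow]

lemma coeff_lagrangePhi_pow_succ (n m : ℕ) :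
    coeff m (lagrangePhi a b ^ (n + 1)) =
      ∑ d ∈ range (m + 1),
        ((n + d).choose n * d.choose (m - d) : K) * a ^ (2 * d - m) * b ^ (m - d) := by
  have hy : HasSubst (C a * X + C b * X ^ 2 : K⟦X⟧) := HasSubst.of_constantCoeff_zero' (by simp)
  rw [lagrangePhi_pow_eq_subst, coeff_subst' hy, invOneSubPow_val_succ_eq_mk_add_choose]
  rw [finsum_eq_sum_of_support_subset (s := range (m + 1))]
  · refine sum_congr rfl fun d hd => ?_
    rw [coeff_mk, coeff_C_mul_X_add_C_mul_X_sq_pow, if_pos (Nat.lt_succ_iff.mp (mem_range.mp hd)),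
      smul_eq_mul]
    ring
  · intro d hd
    rw [Function.mem_support, coeff_C_mul_X_add_C_mul_X_sq_pow] at hd
    rw [coe_range, Set.mem_Iio]
    by_contra h
    exact hd (by rw [if_neg (by omega), smul_zero])

lemma coeff_pred_lagrangePhi_pow {n : ℕ} (hn : 1 ≤ n) :
    coeff (n - 1) (lagrangePhi a b ^ n) =
      ∑ k ∈ Icc ((n - 1) / 2) (n - 1),
        ((n + k - 1).choose k * k.choose (n - k - 1) : K) *
          a ^ (2 * k + 1 - n) * b ^ (n - 1 - k) := by
  obtain ⟨N, rfl⟩ := Nat.exists_eq_add_of_le' hn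
  simp only [Nat.add_sub_cancel]
  rw [coeff_lagrangePhi_pow_succ]
  symm
  calc _ = ∑ k ∈ Icc (N / 2) N,
          ((N + k).choose N * k.choose (N - k) : K) * a ^ (2 * k - N) * b ^ (N - k) := by
        refine sum_congr rfl fun k hk => ?_
        rw [Nat.choose_symm_add, show N + 1 + k - 1 = N + k by omega,
          show N + 1 - k - 1 = N - k by omega, show 2 * k + 1 - (N + 1) = 2 * k - N by omega]
    _ = _ := by
        refine sum_subset (fun k hk => by simp at hk ⊢; omega) fun k hk hk' => ?_
        simp only [mem_range, mem_Icc] at hk hk'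
        rw [Nat.choose_eq_zero_of_lt (by omega : k < N - k)]
        simp

end LagrangePhi

section PowersOfFixedPoint

variable {R : Type*} [CommRing R] {a b : R} {W : R⟦X⟧}

lemma coeff_succ_pow_succ (hW : cubicStep X a b W = W) (n k : ℕ) :
    coeff (n + 1) (W ^ (k + 1)) =
      coeff n (W ^ k) + a * coeff (n + 1) (W ^ (k + 2)) + b * coeff (n + 1) (W ^ (k + 3)) := by
  have h : W ^ (k + 1) = X * W ^ k + C a * W ^ (k + 2) + C b * W ^ (k + 3) := by
    calc W ^ (k + 1) = cubicStep X a b W * W ^ k := by rw [hW, pow_succ']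
      _ = _ := by unfold cubicStep; ring
  rw [h, map_add, map_add, coeff_succ_X_mul, coeff_C_mul, coeff_C_mul]

lemma coeff_pow_self (hW0 : X ∣ W) (hW : cubicStep X a b W = W) (n : ℕ) :
    coeff n (W ^ n) = 1 := by
  induction n with
  | zero => simp
  | succ n ih =>
    rw [coeff_succ_pow_succ hW, ih, coeff_pow_eq_zero_of_lt hW0 (by omega),
      coeff_pow_eq_zero_of_lt hW0 (by omega)]
    ring

lemma coeff_succ_pow (hW0 : X ∣ W) (hW : cubicStep X a b W = W) (k : ℕ) :
    coeff (k + 1) (W ^ k) = k * a := by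
  induction k with
  | zero => simp [coeff_one]
  | succ k ih =>
    rw [coeff_succ_pow_succ hW, ih, coeff_pow_self hW0 hW, coeff_pow_eq_zero_of_lt hW0 (by omega)]
    push_cast
    ring

end PowersOfFixedPoint

section LagrangeInversion

variable {K : Type*} [Field K] [CharZero K] {a b : K} {W : K⟦X⟧}

theorem lagrange_inversion_pow (hW0 : X ∣ W) (hW : cubicStep X a b W = W) :
    ∀ k m : ℕ,
      ((k + m : ℕ) : K) * coeff (k + m) (W ^ k) = k * coeff m (lagrangePhi a b ^ (k + m))
  | k, 0 => by
    simp [coeff_pow_self hW0 hW, constantCoeff_lagrangePhi]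
  | k, 1 => by
    rw [coeff_succ_pow hW0 hW, coeff_one_lagrangePhi_pow]
    push_cast
    ring
  | 0, m + 2 => by simp [coeff_one]
  | k + 1, m + 2 => by
    have hrec := coeff_succ_pow_succ hW (k + m + 2) k
    have ih₁ := lagrange_inversion_pow hW0 hW k (m + 2)
    have ih₂ := lagrange_inversion_pow hW0 hW (k + 2) (m + 1)
    have ih₃ := lagrange_inversion_pow hW0 hW (k + 3) m
    have hpascal := coeff_add_two_lagrangePhi_pow_succ a b (k + m + 2) m
    have hderiv := add_two_mul_coeff_add_two_lagrangePhi_pow a b (k + m + 3) m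
    rw [show k + (m + 2) = k + m + 2 by omega] at ih₁
    rw [show k + 2 + (m + 1) = k + m + 2 + 1 by omega] at ih₂
    rw [show k + 3 + m = k + m + 2 + 1 by omega] at ih₃
    rw [show k + m + 3 = k + m + 2 + 1 by omega] at hderiv
    rw [show k + 1 + (m + 2) = k + m + 2 + 1 by omega]
    refine mul_left_cancel₀ (Nat.cast_ne_zero.mpr (by omega : k + m + 2 ≠ 0)) ?_
    push_cast at *
    linear_combination ((k + m + 3) * (k + m + 2) : K) * hrec + (k + m + 3 : K) * ih₁
      + ((k + m + 2) * a) * ih₂ + ((k + m + 2) * b) * ih₃ - ((k + m + 3) * k : K) * hpascal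
      - hderiv
termination_by k m => k + 2 * m

theorem lagrange_inversion (hW0 : X ∣ W) (hW : cubicStep X a b W = W) {n : ℕ}
    (hn : 1 ≤ n) : (n : K) * coeff n W = coeff (n - 1) (lagrangePhi a b ^ n) := by
  simpa [Nat.add_sub_cancel' hn] using lagrange_inversion_pow hW0 hW 1 (n - 1)

end LagrangeInversion

end PowerSeries

theorem stmt16 (a₃ a₆ : ℤ) (w : PowerSeries ℚ)
    (hw0 : PowerSeries.constantCoeff w = 0)
    (hw : w = X ^ 3 + C (a₃ : ℚ) * w ^ 2 + C (a₆ : ℚ) * w ^ 3) :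
    (∀ m : ℕ, ∃ c : ℤ, PowerSeries.coeff m w = (c : ℚ)) ∧
    (∀ m : ℕ, ¬ (3 ∣ m) → PowerSeries.coeff m w = 0) ∧
    (∀ n : ℕ, 1 ≤ n →
      (n : ℚ) * PowerSeries.coeff (3 * n) w =
        ∑ k ∈ Finset.Icc ((n - 1) / 2) (n - 1),
          ((n + k - 1).choose k * k.choose (n - k - 1) : ℚ) *
            (a₃ : ℚ) ^ (2 * k + 1 - n) * (a₆ : ℚ) ^ (n - 1 - k)) := by
  have hX : X ∣ w := X_dvd_iff.mpr hw0
  have hfix : cubicStep (X ^ 3) (Int.castRingHom ℚ a₃) (Int.castRingHom ℚ a₆) w = w :=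
    hw.symm
  have hcoeff := coeff_eq_map_coeff_expand (Int.castRingHom ℚ) three_ne_zero hX hfix
  have hsupp : ∀ m, ¬ 3 ∣ m → coeff m w = 0 := fun m hm => by
    rw [hcoeff, coeff_expand_of_not_dvd _ _ _ hm, map_zero]
  refine ⟨fun m => ⟨_, hcoeff m⟩, hsupp, fun n hn => ?_⟩
  obtain ⟨W, rfl, hW0, hW⟩ := exists_expand_eq_cubicStep three_ne_zero hX hfix hsupp
  rw [eq_intCast, eq_intCast] at hW
  rw [coeff_expand_mul, lagrange_inversion hW0 hW hn, coeff_pred_lagrangePhi_pow _ _ hn]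
end
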